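/- arXiv:2605.17430 — 7 statements merged into one kernel-verified Lean document; each statement's English description precedes it below -/
import Mathlib

section
/- For every n ∈ ℕ, the graph S^=(n) contains no subgraph isomorphic to C4^△; i.e., S^=(n) is C4^△-free. -/
open SimpleGraph

/-- The number of triangles (copies of `K₃`) in a graph `G`, i.e. `N(K₃, G)`. -/
noncomputable def triangleCount {V : Type*} (G : SimpleGraph V) : ℕ :=
  Set.ncard {s : Finset V | G.IsNClique 3 s}

/-- `G` contains a subgraph isomorphic to `H`. -/
def Contains {W V : Type*} (H : SimpleGraph W) (G : SimpleGraph V) : Prop :=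
  ∃ f : H →g G, Function.Injective f

/-- `G` is `H`-free: it contains no subgraph isomorphic to `H`. -/
def Free {W V : Type*} (H : SimpleGraph W) (G : SimpleGraph V) : Prop :=
  ¬ Contains H G

/-- The expansion `F^△` of a graph `F`: each edge `uv` of `F` is replaced by a triangle
`u v w_{uv}` where the new vertices `w_{uv}` are pairwise distinct and outside `V(F)`. -/
def expansion {V : Type*} (F : SimpleGraph V) : SimpleGraph (V ⊕ F.edgeSet) :=
  SimpleGraph.fromRel (fun a b =>
    (∃ u v, a = Sum.inl u ∧ b = Sum.inl v ∧ F.Adj u v) ∨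
    (∃ u, ∃ e : F.edgeSet, a = Sum.inl u ∧ b = Sum.inr e ∧ u ∈ (e : Sym2 V)))

/-- `C₄^△`, the expansion of the 4-edge cycle: a graph on 8 vertices. -/
def C4expansion : SimpleGraph ((Fin 4) ⊕ (SimpleGraph.cycleGraph 4).edgeSet) :=
  expansion (SimpleGraph.cycleGraph 4)

/-- The generalized Turán number `ex(n, K₃, H)`: the maximum number of triangles in an
`H`-free graph on `n` vertices. -/
noncomputable def exTriangles (n : ℕ) {W : Type*} (H : SimpleGraph W) : ℕ :=
  sSup {k | ∃ G : SimpleGraph (Fin n), _root_.Free H G ∧ triangleCount G = k}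

/-- `T(n)`: the complete bipartite graph on `Fin n` with parts
`X = {v : v < ⌊n/2⌋}` (of size `⌊n/2⌋`) and `Y = {v : v ≥ ⌊n/2⌋}` (of size `⌈n/2⌉`). -/
def Tgraph (n : ℕ) : SimpleGraph (Fin n) :=
  SimpleGraph.fromRel (fun u v => u.val < n / 2 ∧ n / 2 ≤ v.val)

/-- `T⁺(n)`: the graph `T(n)` with one extra edge (between vertices `0` and `1`) added
inside the part `X`. -/
def TgraphPlus (n : ℕ) : SimpleGraph (Fin n) :=
  SimpleGraph.fromRel (fun u v =>
    (u.val < n / 2 ∧ n / 2 ≤ v.val) ∨ (u.val = 0 ∧ v.val = 1))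

/-- `T⁼(n)`: the graph obtained from `T(n)` by adding the edge `e₁ = {0,1}` inside `X`,
adding the edge `e₂ = {⌊n/2⌋, ⌊n/2⌋+1}` inside `Y`, and deleting the perfect matching
`{0,⌊n/2⌋}, {1,⌊n/2⌋+1}` between the endpoints of `e₁` and of `e₂`. -/
def TgraphEq (n : ℕ) : SimpleGraph (Fin n) :=
  SimpleGraph.fromRel (fun u v =>
    (u.val < n / 2 ∧ n / 2 ≤ v.val ∧
      ¬(u.val = 0 ∧ v.val = n / 2) ∧ ¬(u.val = 1 ∧ v.val = n / 2 + 1))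
    ∨ (u.val = 0 ∧ v.val = 1) ∨ (u.val = n / 2 ∧ v.val = n / 2 + 1))

/-- The join `K₁ ⋈ H` of a single new vertex with the graph `H`. -/
def joinK1 {V : Type*} (H : SimpleGraph V) : SimpleGraph (Option V) :=
  SimpleGraph.fromRel (fun u v =>
    u = none ∨ ∃ a b, u = some a ∧ v = some b ∧ H.Adj a b)

/-- `S(n) = K₁ ⋈ T(n-1)`. -/
def Sgraph (n : ℕ) : SimpleGraph (Option (Fin (n - 1))) := joinK1 (Tgraph (n - 1))

/-- `S⁺(n) = K₁ ⋈ T⁺(n-1)`. -/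
def SgraphPlus (n : ℕ) : SimpleGraph (Option (Fin (n - 1))) := joinK1 (TgraphPlus (n - 1))

/-- `S⁼(n) = K₁ ⋈ T⁼(n-1)`. -/
def SgraphEq (n : ℕ) : SimpleGraph (Option (Fin (n - 1))) := joinK1 (TgraphEq (n - 1))

/-- `d_G(uv)`: the number of triangles of `G` containing the edge `uv`, i.e. the number of
common neighbors of `u` and `v`. -/
noncomputable def edgeTriangleDeg {V : Type*} (G : SimpleGraph V) (u v : V) : ℕ :=
  {w : V | G.Adj u w ∧ G.Adj v w}.ncard

/-- `e_G(A, B)`: the number of edges of `G` with one endpoint in `A` and the other in `B`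
(for disjoint `A`, `B`). -/
noncomputable def crossEdges {V : Type*} (G : SimpleGraph V) (A B : Set V) : ℕ :=
  {p : V × V | p.1 ∈ A ∧ p.2 ∈ B ∧ G.Adj p.1 p.2}.ncard

/-!
Every triangle of `T⁼(m)` contains `e₁` or `e₂`, and all triangles through a vertex `c` pass
through one further vertex `tgraphEqHub (m / 2) c`. So two triangles of `T⁼(m)` sharing a vertex
share a second one: `T⁼(m)` contains no bowtie `P₃^△`. An injective copy of `C₄^△` in
`K₁ ⋈ T⁼(m)` sends at most one vertex `x` to the apex, and deleting a cycle vertex touching `x`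
leaves a path `P₃` in `C₄` whose expansion is a bowtie avoiding `x`; it would lie in `T⁼(m)`.
-/

theorem contains_iff_isContained {W V : Type*} {H : SimpleGraph W} {G : SimpleGraph V} :
    Contains H G ↔ H ⊑ G :=
  ⟨fun ⟨f, hf⟩ => ⟨f.toCopy hf⟩, fun ⟨f⟩ => ⟨f.toHom, f.injective⟩⟩

section JoinK1

variable {U V W : Type*} {H : SimpleGraph U} {F : SimpleGraph W} {G : SimpleGraph V}

@[simp]
theorem joinK1_adj_some {a b : V} : (joinK1 G).Adj (some a) (some b) ↔ G.Adj a b := by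
  simp only [joinK1, fromRel_adj, ne_eq, Option.some.injEq, reduceCtorEq, false_or,
    exists_and_left, exists_eq_left']
  exact ⟨fun ⟨_, h⟩ => h.elim id G.adj_symm, fun h => ⟨h.ne, .inl h⟩⟩

theorem isContained_of_copy_joinK1 (f : Copy H (joinK1 G)) (hf : ∀ y, f y ≠ none) : H ⊑ G :=
  ⟨⟨⟨fun y => (f y).get (Option.ne_none_iff_isSome.1 (hf y)), fun {y z} hyz => by
      rw [← joinK1_adj_some, Option.some_get, Option.some_get]
      exact f.toHom.map_adj hyz⟩,
    fun y z hyz => f.injective (Option.get_inj.1 hyz)⟩⟩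

theorem free_joinK1 [Nonempty W] (hG : H.Free G)
    (hF : ∀ x : W, ∃ f : Copy H F, x ∉ Set.range f) : F.Free (joinK1 G) := by
  rintro ⟨f⟩
  obtain ⟨x, hx⟩ : ∃ x, ∀ y, y ≠ x → f y ≠ none := by
    by_cases hapex : ∃ x, f x = none
    · obtain ⟨x, hx⟩ := hapex
      exact ⟨x, fun y hyx hy => hyx (f.injective (hy.trans hx.symm))⟩
    · push Not at hapex
      exact ⟨Classical.arbitrary W, fun y _ => hapex y⟩
  obtain ⟨g, hg⟩ := hF x
  exact hG (isContained_of_copy_joinK1 (f.comp g) fun y => hx (g y) fun h => hg ⟨y, h⟩)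

end JoinK1

section Expansion

variable {V V' : Type*} {F : SimpleGraph V} {F' : SimpleGraph V'}

@[simp]
theorem expansion_adj_inl_inl {u v : V} :
    (expansion F).Adj (.inl u) (.inl v) ↔ F.Adj u v := by
  simpa [expansion, F.adj_comm v u] using fun h => h.ne

@[simp]
theorem expansion_adj_inl_inr {u : V} {e : F.edgeSet} :
    (expansion F).Adj (.inl u) (.inr e) ↔ u ∈ (e : Sym2 V) := by
  simp [expansion]

@[simp]
theorem expansion_adj_inr_inr {e e' : F.edgeSet} : ¬ (expansion F).Adj (.inr e) (.inr e') := by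
  simp [expansion]

def SimpleGraph.Copy.expansion (f : Copy F F') : Copy (expansion F) (expansion F') where
  toHom.toFun := Sum.map f f.toHom.mapEdgeSet
  toHom.map_rel' := by
    rintro (u | e) (v | e') h
    · simpa using f.toHom.map_adj (expansion_adj_inl_inl.1 h)
    · simpa using Sym2.mem_map.2 ⟨u, expansion_adj_inl_inr.1 h, rfl⟩
    · rw [adj_comm] at h ⊢
      simpa using Sym2.mem_map.2 ⟨v, expansion_adj_inl_inr.1 h, rfl⟩
    · exact absurd h expansion_adj_inr_inr
  injective' := f.injective.sumMap (Hom.mapEdgeSet.injective _ f.injective)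

theorem exists_copy_expansion_notMem_range (h : ∀ v : V', ∃ f : Copy F F', v ∉ Set.range f)
    (x : V' ⊕ F'.edgeSet) : ∃ f : Copy (expansion F) (expansion F'), x ∉ Set.range f := by
  obtain ⟨v, hv⟩ : ∃ v, x = .inl v ∨ ∃ e : F'.edgeSet, x = .inr e ∧ v ∈ (e : Sym2 V') := by
    rcases x with v | ⟨e, he⟩
    · exact ⟨v, .inl rfl⟩
    · induction e using Sym2.ind with
      | h a b => exact ⟨a, .inr ⟨_, rfl, Sym2.mem_mk_left a b⟩⟩
  obtain ⟨f, hf⟩ := h v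
  refine ⟨f.expansion, ?_⟩
  rintro ⟨y | e', hy⟩ <;> rcases hv with rfl | ⟨e, rfl, hve⟩
  · exact hf ⟨y, Sum.inl_injective hy⟩
  · cases hy
  · cases hy
  · obtain ⟨z, -, rfl⟩ := Sym2.mem_map.1 ((congrArg Subtype.val (Sum.inr_injective hy)) ▸ hve)
    exact hf ⟨z, rfl⟩

end Expansion

theorem exists_copy_pathGraph_three_cycleGraph_four_notMem_range (v : Fin 4) :
    ∃ f : Copy (pathGraph 3) (cycleGraph 4), v ∉ Set.range f := by
  refine ⟨⟨⟨fun j => v + 1 + j.castSucc, fun {a b} hab => ?_⟩, fun a b hab => ?_⟩, ?_⟩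
  · rw [pathGraph_adj] at hab
    rw [cycleGraph_adj]
    revert v a b
    decide
  · revert v a b
    decide
  · rintro ⟨a, ha⟩
    revert v a
    decide

/-- `expansion (pathGraph 3)` is the bowtie: two triangles sharing exactly one vertex. -/
theorem free_expansion_pathGraph_three {V : Type*} {G : SimpleGraph V}
    (htri : ∀ c x y x' y', G.Adj c x → G.Adj c y → G.Adj x y →
      G.Adj c x' → G.Adj c y' → G.Adj x' y' → x = x' ∨ x = y' ∨ y = x' ∨ y = y') :
    (expansion (pathGraph 3)).Free G := by
  rintro ⟨f⟩
  let e₀₁ : (pathGraph 3).edgeSet := ⟨s(0, 1), by simp [pathGraph_adj]⟩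
  let e₁₂ : (pathGraph 3).edgeSet := ⟨s(1, 2), by simp [pathGraph_adj]⟩
  have hf {a b} (hab : (expansion (pathGraph 3)).Adj a b) : G.Adj (f a) (f b) :=
    f.toHom.map_adj hab
  have hshare := htri (f (.inl 1)) (f (.inl 0)) (f (.inr e₀₁)) (f (.inl 2)) (f (.inr e₁₂))
    (hf (by simp [pathGraph_adj])) (hf (by simp [e₀₁])) (hf (by simp [e₀₁]))
    (hf (by simp [pathGraph_adj])) (hf (by simp [e₁₂])) (hf (by simp [e₁₂]))
  rcases hshare with h | h | h | h <;> simpa [e₀₁, e₁₂] using f.injective h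

/-- With `h = ⌊m/2⌋`: the partner of `c` on `e₁ = {0, 1}` or `e₂ = {h, h + 1}`, and otherwise an
endpoint of the one of `e₁`, `e₂` lying on the other side from `c`. -/
def tgraphEqHub (h c : ℕ) : ℕ :=
  if c = 0 then 1 else if c = 1 then 0 else if c = h then h + 1 else if c = h + 1 then h
  else if c < h then h else 0

theorem tgraphEq_triangle_hub {m : ℕ} {c x y : Fin m} (hx : (TgraphEq m).Adj c x)
    (hy : (TgraphEq m).Adj c y) (hxy : (TgraphEq m).Adj x y) :
    x.val = tgraphEqHub (m / 2) c ∨ y.val = tgraphEqHub (m / 2) c := by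
  simp only [TgraphEq, fromRel_adj, ne_eq, Fin.ext_iff] at hx hy hxy
  unfold tgraphEqHub
  split_ifs <;> omega

theorem free_expansion_pathGraph_three_tgraphEq (m : ℕ) :
    (expansion (pathGraph 3)).Free (TgraphEq m) :=
  free_expansion_pathGraph_three fun _ _ _ _ _ hx hy hxy hx' hy' hxy' => by
    have hub := tgraphEq_triangle_hub hx hy hxy
    have hub' := tgraphEq_triangle_hub hx' hy' hxy'
    simp only [Fin.ext_iff]
    omega

/-- For every `n`, the graph `S⁼(n)` is `C₄^△`-free. -/
theorem stmt2 (n : ℕ) : _root_.Free C4expansion (SgraphEq n) := by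
  rw [_root_.Free, contains_iff_isContained]
  exact free_joinK1 (free_expansion_pathGraph_three_tgraphEq (n - 1))
    (exists_copy_expansion_notMem_range exists_copy_pathGraph_three_cycleGraph_four_notMem_range)
end

section
/- For every n ≥ 15, N(K3, S^=(n)) > N(K3, S^+(n)) > N(K3, S(n)). -/
open SimpleGraph

/-!
A triangle of `K₁ ⋈ H` either contains the new vertex, and then is the new vertex together with
an edge of `H`, or is a triangle of `H`; hence `N(K₃, K₁ ⋈ H) = e(H) + N(K₃, H)`. Adding a
non-edge `uv` to a graph creates exactly as many triangles as `u` and `v` have common neighbours.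
Write `m = n - 1`. The bipartite graph `T(m)` is triangle-free; `T⁺(m)` adds to it one edge
inside `X`, which creates `⌈m/2⌉` triangles; `T⁼(m)` adds two edges to `T(m)` minus a matching
of two edges, creating `(⌈m/2⌉ - 2) + (⌊m/2⌋ - 2) = m - 4` triangles, and has as many edges
as `T(m)`. So `N(K₃, S(n)) = e(T)`, `N(K₃, S⁺(n)) = e(T) + 1 + ⌈m/2⌉` and
`N(K₃, S⁼(n)) = e(T) + m - 4`, and the inequalities hold as soon as `⌊m/2⌋ ≥ 6`.
-/

namespace SimpleGraph

variable {V : Type*}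

theorem ncard_setOf_isNClique_two (G : SimpleGraph V) :
    {s : Finset V | G.IsNClique 2 s}.ncard = G.edgeSet.ncard := by
  classical
  symm
  refine Set.ncard_congr (fun e _ => e.toFinset) ?_ ?_ ?_
  · intro e he
    induction e using Sym2.ind with
    | _ a b =>
      have hab : G.Adj a b := he
      simp [Sym2.toFinset_mk_eq, isNClique_iff, Finset.card_pair hab.ne, hab]
  · intro e e' _ _ h
    exact Sym2.ext fun x => by rw [← Sym2.mem_toFinset, h, Sym2.mem_toFinset]
  · intro s hs
    obtain ⟨a, b, hab, rfl⟩ := Finset.card_eq_two.mp hs.card_eq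
    exact ⟨s(a, b), hs.isClique (by simp) (by simp) hab, Sym2.toFinset_mk_eq⟩

theorem ncard_edgeSet_sup_edge [Finite V] {G : SimpleGraph V} {u v : V} (huv : u ≠ v)
    (hadj : ¬G.Adj u v) : (G ⊔ edge u v).edgeSet.ncard = G.edgeSet.ncard + 1 := by
  rw [edgeSet_sup, edgeSet_edge_of_ne huv, Set.union_singleton,
    Set.ncard_insert_of_notMem (show s(u, v) ∉ G.edgeSet from hadj)]

end SimpleGraph

section triangleCount

variable {V : Type*} {G : SimpleGraph V}

theorem triangleCount_eq_zero (h : G.CliqueFree 3) : triangleCount G = 0 := by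
  rw [triangleCount, ← cliqueSet, cliqueSet_eq_empty_iff.mpr h, Set.ncard_empty]

theorem isNClique_three_sup_edge_iff [DecidableEq V] {u v : V} (huv : u ≠ v) {s : Finset V} :
    (G ⊔ edge u v).IsNClique 3 s ↔
      G.IsNClique 3 s ∨ ∃ w ∈ G.commonNeighbors u v, {u, v, w} = s := by
  simp only [mem_commonNeighbors]
  constructor
  · intro hs
    by_cases hu : u ∈ s
    · by_cases hv : v ∈ s
      · right
        have hv' : v ∈ s.erase u := Finset.mem_erase.2 ⟨huv.symm, hv⟩
        obtain ⟨w, hw⟩ : ∃ w, (s.erase u).erase v = {w} := Finset.card_eq_one.mp (by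
          rw [Finset.card_erase_of_mem hv', Finset.card_erase_of_mem hu, hs.card_eq])
        have hwv : w ≠ v := Finset.ne_of_mem_erase (hw ▸ Finset.mem_singleton_self w)
        have hwu : w ≠ u := Finset.ne_of_mem_erase
          (Finset.mem_of_mem_erase (hw ▸ Finset.mem_singleton_self w))
        have hs' : s = {u, v, w} := by
          rw [← hw, Finset.insert_erase hv', Finset.insert_erase hu]
        subst hs'
        obtain ⟨-, huw, hvw⟩ := is3Clique_triple_iff.mp hs
        exact ⟨w, ⟨by simpa [edge_adj, hwu, hwv] using huw,
          by simpa [edge_adj, hwu, hwv] using hvw⟩, rfl⟩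
      · have hG := (edge_comm u v ▸ hs.1).sdiff_of_sup_edge
        rw [Set.sdiff_singleton_eq_self (by simpa using hv)] at hG
        exact .inl ⟨hG, hs.2⟩
    · have hG := hs.1.sdiff_of_sup_edge
      rw [Set.sdiff_singleton_eq_self (by simpa using hu)] at hG
      exact .inl ⟨hG, hs.2⟩
  · rintro (hs | ⟨w, ⟨huw, hvw⟩, rfl⟩)
    · exact hs.mono le_sup_left
    · exact is3Clique_triple_iff.mpr
        ⟨Or.inr ((edge_adj _ _ _ _).mpr ⟨Or.inl ⟨rfl, rfl⟩, huv⟩), Or.inl huw, Or.inl hvw⟩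

theorem triangleCount_sup_edge [Finite V] {u v : V} (huv : u ≠ v) (hadj : ¬G.Adj u v) :
    triangleCount (G ⊔ edge u v) = triangleCount G + (G.commonNeighbors u v).ncard := by
  classical
  have hset : {s : Finset V | (G ⊔ edge u v).IsNClique 3 s} =
      {s | G.IsNClique 3 s} ∪ (fun w => {u, v, w}) '' G.commonNeighbors u v := by
    exact Set.ext fun _ => isNClique_three_sup_edge_iff huv
  rw [triangleCount, triangleCount, hset, Set.ncard_union_eq, Set.InjOn.ncard_image]
  · rintro w ⟨huw, hvw⟩ w' - h
    have : w ∈ ({u, v, w'} : Finset V) := by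
      rw [← show ({u, v, w} : Finset V) = {u, v, w'} from h]; simp
    simpa [huw.ne', hvw.ne'] using this
  · refine Set.disjoint_left.mpr ?_
    rintro _ hs ⟨w, -, rfl⟩
    exact hadj (is3Clique_triple_iff.mp hs).1

end triangleCount

section joinK1

open Finset

variable {V : Type*} (H : SimpleGraph V)

@[simp]
lemma joinK1_adj_none_some (a : V) : (joinK1 H).Adj none (some a) := by
  simp [joinK1]

@[simp]
lemma joinK1_adj_some_some {a b : V} : (joinK1 H).Adj (some a) (some b) ↔ H.Adj a b := by
  simpa [joinK1, H.adj_comm b a] using H.ne_of_adj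

lemma isClique_joinK1_image_some {s : Set V} :
    (joinK1 H).IsClique (some '' s) ↔ H.IsClique s := by
  rw [IsClique, (Option.some_injective V).injOn.pairwise_image]
  simp [IsClique, Set.Pairwise, Function.onFun]

lemma isNClique_joinK1_map_some {n : ℕ} {t : Finset V} :
    (joinK1 H).IsNClique n (t.map .some) ↔ H.IsNClique n t := by
  simp [isNClique_iff, isClique_joinK1_image_some]

lemma isNClique_joinK1_insertNone {n : ℕ} {t : Finset V} :
    (joinK1 H).IsNClique (n + 1) (insertNone t) ↔ H.IsNClique n t := by
  have : (insertNone t : Set (Option V)) = insert none (some '' t) := by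
    ext (_ | a) <;> simp
  simp [isNClique_iff, this, isClique_insert, isClique_joinK1_image_some]

theorem triangleCount_joinK1 [Finite V] :
    triangleCount (joinK1 H) = H.edgeSet.ncard + triangleCount H := by
  classical
  have hset : {s | (joinK1 H).IsNClique 3 s} =
      insertNone '' {t | H.IsNClique 2 t} ∪ map .some '' {t | H.IsNClique 3 t} := by
    ext s
    simp only [Set.mem_union, Set.mem_image, Set.mem_ofPred_eq]
    constructor
    · intro hs
      by_cases h : none ∈ s
      · have hs' : insertNone (eraseNone s) = s := by
          rw [insertNone_eraseNone, insert_eq_of_mem h]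
        exact .inl ⟨eraseNone s, (isNClique_joinK1_insertNone H).mp (by rwa [hs']), hs'⟩
      · have hs' : map .some (eraseNone s) = s := by
          rw [map_some_eraseNone, erase_eq_of_notMem h]
        exact .inr ⟨eraseNone s, (isNClique_joinK1_map_some H).mp (by rwa [hs']), hs'⟩
    · rintro (⟨t, ht, rfl⟩ | ⟨t, ht, rfl⟩)
      · exact (isNClique_joinK1_insertNone H).mpr ht
      · exact (isNClique_joinK1_map_some H).mpr ht
  have hdisj : Disjoint (insertNone '' {t | H.IsNClique 2 t})
      (map .some '' {t | H.IsNClique 3 t}) := by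
    refine Set.disjoint_left.mpr ?_
    rintro _ ⟨t, -, rfl⟩ ⟨t', -, h⟩
    have := none_mem_insertNone (s := t)
    rw [← h] at this
    simp at this
  rw [triangleCount, triangleCount, hset, Set.ncard_union_eq hdisj,
    Set.ncard_image_of_injective _ insertNone.injective,
    Set.ncard_image_of_injective _ (Finset.map_injective _), ncard_setOf_isNClique_two]

end joinK1

lemma Fin.ncard_setOf_val_mem_Ico {m a b : ℕ} (hb : b ≤ m) :
    {w : Fin m | a ≤ w.val ∧ w.val < b}.ncard = b - a := by
  rw [← Set.ncard_image_of_injective _ Fin.val_injective, ← Set.ncard_Ico_nat]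
  congr 1
  ext x
  simp only [Set.mem_image, Set.mem_ofPred_eq, Set.mem_Ico]
  exact ⟨fun ⟨w, hw, hx⟩ => hx ▸ hw, fun hx => ⟨⟨x, by omega⟩, hx, rfl⟩⟩

def TgraphMinusMatching (m : ℕ) : SimpleGraph (Fin m) :=
  SimpleGraph.fromRel (fun u v =>
    u.val < m / 2 ∧ m / 2 ≤ v.val ∧
      ¬(u.val = 0 ∧ v.val = m / 2) ∧ ¬(u.val = 1 ∧ v.val = m / 2 + 1))

section Tgraph

variable {m : ℕ}

lemma Tgraph_adj {u v : Fin m} :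
    (Tgraph m).Adj u v ↔ u.val < m / 2 ∧ m / 2 ≤ v.val ∨ v.val < m / 2 ∧ m / 2 ≤ u.val := by
  rw [Tgraph, fromRel_adj, and_iff_right_iff_imp]
  rintro h rfl
  omega

lemma Tgraph_cliqueFree_three : (Tgraph m).CliqueFree 3 := by
  intro s hs
  obtain ⟨a, b, c, hab, hac, hbc, -⟩ := is3Clique_iff.mp hs
  rw [Tgraph_adj] at hab hac hbc
  omega

lemma TgraphMinusMatching_le_Tgraph : TgraphMinusMatching m ≤ Tgraph m := by
  intro u v
  simp only [TgraphMinusMatching, fromRel_adj, Tgraph_adj]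
  omega

lemma TgraphPlus_eq_sup_edge (hm : 4 ≤ m) :
    TgraphPlus m = Tgraph m ⊔ edge ⟨0, by omega⟩ ⟨1, by omega⟩ := by
  ext u v
  simp only [TgraphPlus, fromRel_adj, sup_adj, Tgraph_adj, edge_adj, Fin.ext_iff, ne_eq]
  omega

lemma Tgraph_eq_TgraphMinusMatching_sup_edge_sup_edge (hm : 4 ≤ m) :
    Tgraph m = TgraphMinusMatching m ⊔ edge ⟨0, by omega⟩ ⟨m / 2, by omega⟩ ⊔
      edge ⟨1, by omega⟩ ⟨m / 2 + 1, by omega⟩ := by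
  ext u v
  simp only [TgraphMinusMatching, fromRel_adj, sup_adj, Tgraph_adj, edge_adj, Fin.ext_iff, ne_eq]
  omega

lemma TgraphEq_eq_TgraphMinusMatching_sup_edge_sup_edge (hm : 4 ≤ m) :
    TgraphEq m = TgraphMinusMatching m ⊔ edge ⟨0, by omega⟩ ⟨1, by omega⟩ ⊔
      edge ⟨m / 2, by omega⟩ ⟨m / 2 + 1, by omega⟩ := by
  ext u v
  simp only [TgraphEq, TgraphMinusMatching, fromRel_adj, sup_adj, edge_adj, Fin.ext_iff, ne_eq]
  omega

lemma ncard_edgeSet_TgraphPlus (hm : 4 ≤ m) :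
    (TgraphPlus m).edgeSet.ncard = (Tgraph m).edgeSet.ncard + 1 := by
  rw [TgraphPlus_eq_sup_edge hm, ncard_edgeSet_sup_edge (by simp [Fin.ext_iff])
    (by simp [Tgraph_adj]; omega)]

lemma ncard_edgeSet_TgraphEq (hm : 4 ≤ m) :
    (TgraphEq m).edgeSet.ncard = (Tgraph m).edgeSet.ncard := by
  rw [TgraphEq_eq_TgraphMinusMatching_sup_edge_sup_edge hm,
    Tgraph_eq_TgraphMinusMatching_sup_edge_sup_edge hm, ncard_edgeSet_sup_edge,
    ncard_edgeSet_sup_edge, ncard_edgeSet_sup_edge, ncard_edgeSet_sup_edge]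
  all_goals simp [TgraphMinusMatching, edge_adj, Fin.ext_iff] <;> omega

lemma triangleCount_Tgraph : triangleCount (Tgraph m) = 0 :=
  triangleCount_eq_zero Tgraph_cliqueFree_three

lemma triangleCount_TgraphPlus (hm : 4 ≤ m) : triangleCount (TgraphPlus m) = m - m / 2 := by
  rw [TgraphPlus_eq_sup_edge hm, triangleCount_sup_edge (by simp [Fin.ext_iff])
    (by simp [Tgraph_adj]; omega), triangleCount_Tgraph, zero_add,
    ← Fin.ncard_setOf_val_mem_Ico le_rfl]
  congr 1
  ext w
  simp [mem_commonNeighbors, Tgraph_adj]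
  omega

lemma ncard_commonNeighbors_TgraphMinusMatching (hm : 4 ≤ m) :
    ((TgraphMinusMatching m).commonNeighbors ⟨0, by omega⟩ ⟨1, by omega⟩).ncard =
      m - (m / 2 + 2) := by
  rw [← Fin.ncard_setOf_val_mem_Ico le_rfl]
  congr 1
  ext w
  simp [mem_commonNeighbors, TgraphMinusMatching, Fin.ext_iff]
  omega

lemma ncard_commonNeighbors_TgraphMinusMatching_sup_edge (hm : 4 ≤ m) :
    ((TgraphMinusMatching m ⊔ edge ⟨0, by omega⟩ ⟨1, by omega⟩).commonNeighbors
      ⟨m / 2, by omega⟩ ⟨m / 2 + 1, by omega⟩).ncard = m / 2 - 2 := by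
  rw [← Fin.ncard_setOf_val_mem_Ico (m := m) (by omega)]
  congr 1
  ext w
  simp [mem_commonNeighbors, TgraphMinusMatching, edge_adj, Fin.ext_iff]
  omega

lemma triangleCount_TgraphEq (hm : 4 ≤ m) : triangleCount (TgraphEq m) = m - 4 := by
  rw [TgraphEq_eq_TgraphMinusMatching_sup_edge_sup_edge hm, triangleCount_sup_edge,
    triangleCount_sup_edge,
    triangleCount_eq_zero (Tgraph_cliqueFree_three.anti TgraphMinusMatching_le_Tgraph),
    ncard_commonNeighbors_TgraphMinusMatching hm,
    ncard_commonNeighbors_TgraphMinusMatching_sup_edge hm]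
  · omega
  all_goals simp [TgraphMinusMatching, edge_adj, Fin.ext_iff] <;> omega

end Tgraph

/-- For every `n ≥ 15`, `N(K₃, S⁼(n)) > N(K₃, S⁺(n)) > N(K₃, S(n))`. -/
theorem stmt5 (n : ℕ) (hn : 15 ≤ n) :
    triangleCount (SgraphPlus n) < triangleCount (SgraphEq n) ∧
    triangleCount (Sgraph n) < triangleCount (SgraphPlus n) := by
  have hm : 4 ≤ n - 1 := by omega
  rw [Sgraph, SgraphPlus, SgraphEq, triangleCount_joinK1, triangleCount_joinK1,
    triangleCount_joinK1, ncard_edgeSet_TgraphPlus hm, ncard_edgeSet_TgraphEq hm,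
    triangleCount_Tgraph, triangleCount_TgraphPlus hm, triangleCount_TgraphEq hm]
  omega
end

section
/- There exists a constant C > 0 such that for every n ∈ ℕ, ex(n, K3, C4^△) ≤ C·n²; that is, every C4^△-free graph on n vertices has at most C·n² triangles. -/
open SimpleGraph

-- auxiliary lemmas
private def idx4 : Sym2 (Fin 4) → Fin 4 := fun e =>
  if e = s(0,1) then 0 else if e = s(1,2) then 1 else if e = s(2,3) then 2 else 3

private lemma idx4_spec : ∀ e ∈ (cycleGraph 4).edgeSet, e = s(idx4 e, idx4 e + 1) := by decide

private lemma idx4_mem : ∀ e ∈ (cycleGraph 4).edgeSet, ∀ i : Fin 4,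
    i ∈ e → (i = idx4 e ∨ i = idx4 e + 1) := by decide

private lemma cg4_adj : ∀ i j : Fin 4, (cycleGraph 4).Adj i j ↔ (j = i + 1 ∨ i = j + 1) := by
  decide


private lemma inj4 {α : Type*} {x0 x1 x2 x3 : α} (h01 : x0≠x1) (h02 : x0≠x2) (h03 : x0≠x3)
    (h12 : x1≠x2) (h13 : x1≠x3) (h23 : x2≠x3) : Function.Injective ![x0,x1,x2,x3] := by
  intro i j hij
  fin_cases i <;> fin_cases j <;> simp_all

private lemma cyc4 {α : Type*} (P : α → α → Prop) (x0 x1 x2 x3 : α)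
    (h0 : P x0 x1) (h1 : P x1 x2) (h2 : P x2 x3) (h3 : P x3 x0) :
    ∀ i : Fin 4, P (![x0,x1,x2,x3] i) (![x0,x1,x2,x3] (i+1)) := by
  intro i
  fin_cases i <;> simpa using ‹_›

private lemma deg_comm {n : ℕ} (G : SimpleGraph (Fin n)) (u v : Fin n) :
    edgeTriangleDeg G u v = edgeTriangleDeg G v u := by
  unfold edgeTriangleDeg; congr 1; ext w; exact and_comm

private lemma exists_avoid {n : ℕ} (s : Set (Fin n)) (t : Finset (Fin n))
    (ht : t.card ≤ 7) (hs : 8 ≤ s.ncard) : ∃ w ∈ s, w ∉ t := by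
  by_contra h
  push_neg at h
  have hsub : s ⊆ ↑t := fun w hw => h w hw
  have := Set.ncard_le_ncard hsub t.finite_toSet
  rw [Set.ncard_coe_finset] at this
  omega

private lemma noHeavyC4 {n : ℕ} {G : SimpleGraph (Fin n)} (hG : _root_.Free C4expansion G)
    (c : Fin 4 → Fin n) (hinj : Function.Injective c)
    (hadj : ∀ i : Fin 4, G.Adj (c i) (c (i+1)))
    (hheavy : ∀ i : Fin 4, 8 ≤ edgeTriangleDeg G (c i) (c (i+1))) : False := by
  classical
  set S : Fin 4 → Set (Fin n) := fun i => {w | G.Adj (c i) w ∧ G.Adj (c (i+1)) w} with hSdef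
  have hS : ∀ i, 8 ≤ (S i).ncard := hheavy
  have hcard4 : ({c 0, c 1, c 2, c 3} : Finset (Fin n)).card ≤ 4 := by
    apply le_trans (Finset.card_insert_le _ _)
    apply Nat.succ_le_succ
    apply le_trans (Finset.card_insert_le _ _)
    apply Nat.succ_le_succ
    apply le_trans (Finset.card_insert_le _ _)
    simp
  obtain ⟨a0, ha0S, ha0⟩ := exists_avoid (S 0) {c 0, c 1, c 2, c 3} (by omega) (hS 0)
  obtain ⟨a1, ha1S, ha1⟩ := exists_avoid (S 1) (insert a0 {c 0, c 1, c 2, c 3})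
    (le_trans (Finset.card_insert_le _ _) (by omega)) (hS 1)
  obtain ⟨a2, ha2S, ha2⟩ := exists_avoid (S 2) (insert a1 (insert a0 {c 0, c 1, c 2, c 3}))
    (le_trans (Finset.card_insert_le _ _) (Nat.succ_le_succ
      (le_trans (Finset.card_insert_le _ _) (by omega)))) (hS 2)
  obtain ⟨a3, ha3S, ha3⟩ := exists_avoid (S 3)
    (insert a2 (insert a1 (insert a0 {c 0, c 1, c 2, c 3})))
    (le_trans (Finset.card_insert_le _ _) (Nat.succ_le_succ
      (le_trans (Finset.card_insert_le _ _) (Nat.succ_le_succ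
        (le_trans (Finset.card_insert_le _ _) (by omega)))))) (hS 3)
  simp only [Finset.mem_insert, Finset.mem_singleton, not_or] at ha0 ha1 ha2 ha3
  set a : Fin 4 → Fin n := ![a0, a1, a2, a3] with hadef
  have haS : ∀ i, a i ∈ S i := by
    intro i; fin_cases i <;> simpa [hadef] using (by assumption : _)

  have haC : ∀ i j : Fin 4, a i ≠ c j := by
    intro i j
    fin_cases i <;> fin_cases j <;> simp [hadef] <;> tauto
  have haa : ∀ i j : Fin 4, i ≠ j → a i ≠ a j := by
    intro i j hij
    fin_cases i <;> fin_cases j <;> simp_all [hadef] <;> tauto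
  have haS1 : ∀ i, G.Adj (c i) (a i) := fun i => (haS i).1
  have haS2 : ∀ i, G.Adj (c (i+1)) (a i) := fun i => (haS i).2
  set f : (Fin 4) ⊕ (cycleGraph 4).edgeSet → Fin n :=
    Sum.elim c (fun e => a (idx4 e.1)) with hfdef
  have key : ∀ x y : (Fin 4) ⊕ (cycleGraph 4).edgeSet,
      ((∃ u v, x = Sum.inl u ∧ y = Sum.inl v ∧ (cycleGraph 4).Adj u v) ∨
       (∃ u, ∃ e : (cycleGraph 4).edgeSet, x = Sum.inl u ∧ y = Sum.inr e ∧
         u ∈ (e : Sym2 (Fin 4)))) →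
      G.Adj (f x) (f y) := by
    rintro x y (⟨u, v, rfl, rfl, huv⟩ | ⟨u, e, rfl, rfl, hue⟩)
    · rcases (cg4_adj u v).mp huv with h | h
      · subst h; exact hadj u
      · subst h; exact (hadj v).symm
    · rcases idx4_mem e.1 e.2 u hue with h | h
      · subst h; exact haS1 _
      · rw [h]; exact haS2 _
  apply hG
  refine ⟨⟨f, ?_⟩, ?_⟩
  · intro x y hxy
    simp only [C4expansion, expansion, SimpleGraph.fromRel_adj] at hxy
    rcases hxy with ⟨hne, h | h⟩
    · exact key x y h
    · exact (key y x h).symm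
  · intro x y hxy
    match x, y with
    | Sum.inl i, Sum.inl j => exact congrArg Sum.inl (hinj hxy)
    | Sum.inl i, Sum.inr e => exact absurd hxy.symm (haC _ _)
    | Sum.inr e, Sum.inl i => exact absurd hxy (haC _ _)
    | Sum.inr e, Sum.inr e' =>
      have hi : idx4 e.1 = idx4 e'.1 := by
        by_contra h
        exact haa _ _ h hxy
      have : (e : Sym2 (Fin 4)) = e' := by
        rw [idx4_spec e.1 e.2, idx4_spec e'.1 e'.2, hi]
      exact congrArg Sum.inr (Subtype.ext this)

set_option maxHeartbeats 2000000 in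
private lemma main_bound {n : ℕ} {G : SimpleGraph (Fin n)} (hG : _root_.Free C4expansion G) :
    triangleCount G ≤ 22 * n ^ 2 := by
  classical
  set T : Finset (Finset (Fin n)) := Finset.univ.filter (fun s => G.IsNClique 3 s) with hTdef
  have hTC : triangleCount G = T.card := by
    rw [triangleCount, ← Set.ncard_coe_finset T]
    congr 1
    ext s
    simp [hTdef]
  rw [hTC]
  rcases T.eq_empty_or_nonempty with hemp | ⟨s0, hs0⟩
  · simp [hemp]
  have hz : ∃ z : Fin n, True := by
    have h3 : s0.card = 3 := by
      rw [hTdef] at hs0; exact (Finset.mem_filter.mp hs0).2.2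
    have : s0.Nonempty := Finset.card_pos.mp (by omega)
    exact ⟨this.choose, trivial⟩
  obtain ⟨z, -⟩ := hz
  set Tri : Finset (Fin n × Fin n × Fin n) := Finset.univ.filter
    (fun p => G.Adj p.1 p.2.1 ∧ G.Adj p.1 p.2.2 ∧ G.Adj p.2.1 p.2.2) with hTridef
  -- step: T.card ≤ Tri.card
  have h1 : T.card ≤ Tri.card := by
    set F : Finset (Fin n) → Fin n × Fin n × Fin n := fun s =>
      if h : ∃ p : Fin n × Fin n × Fin n, G.Adj p.1 p.2.1 ∧ G.Adj p.1 p.2.2 ∧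
          G.Adj p.2.1 p.2.2 ∧ s = {p.1, p.2.1, p.2.2} then h.choose else (z, z, z)
      with hFdef
    have hex : ∀ s ∈ T, ∃ p : Fin n × Fin n × Fin n, G.Adj p.1 p.2.1 ∧ G.Adj p.1 p.2.2 ∧
        G.Adj p.2.1 p.2.2 ∧ s = {p.1, p.2.1, p.2.2} := by
      intro s hs
      rw [hTdef, Finset.mem_filter] at hs
      obtain ⟨-, hclique, hcard⟩ := hs
      rw [Finset.card_eq_three] at hcard
      obtain ⟨x, y, w, hxy, hxw, hyw, rfl⟩ := hcard
      refine ⟨(x, y, w), ?_, ?_, ?_, rfl⟩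
      · exact hclique (by simp) (by simp) hxy
      · exact hclique (by simp) (by simp) hxw
      · exact hclique (by simp) (by simp) hyw
    apply Finset.card_le_card_of_injOn F
    · intro s hs
      have h := hex s hs
      rw [hFdef]
      simp only [dif_pos h]
      rw [hTridef, Finset.mem_coe, Finset.mem_filter]
      exact ⟨Finset.mem_univ _, h.choose_spec.1, h.choose_spec.2.1, h.choose_spec.2.2.1⟩
    · intro s hs s' hs' hFeq
      have h := hex s hs
      have h' := hex s' hs'
      rw [hFdef] at hFeq
      simp only [dif_pos h, dif_pos h'] at hFeq
      rw [h.choose_spec.2.2.2, h'.choose_spec.2.2.2, hFeq]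
  -- generic bound for "light" subsets
  have hunivPP : (Finset.univ : Finset (Fin n × Fin n)).card = n * n := by
    simp
  have light : ∀ (g : Fin n × Fin n × Fin n → Fin n × Fin n)
      (w : Fin n × Fin n × Fin n → Fin n) (A : Finset (Fin n × Fin n × Fin n)),
      (∀ p ∈ A, edgeTriangleDeg G (g p).1 (g p).2 ≤ 7) →
      (∀ p ∈ A, G.Adj (g p).1 (w p) ∧ G.Adj (g p).2 (w p)) →
      (∀ p p', g p = g p' → w p = w p' → p = p') →
      A.card ≤ 7 * n ^ 2 := by
    intro g w A hlight hcn hrec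
    have hb : A.card ≤ 7 * (A.image g).card := by
      apply Finset.card_le_mul_card_image
      intro ab hab
      obtain ⟨p₀, hp₀A, hp₀⟩ := Finset.mem_image.mp hab
      have hncard : ({v | G.Adj ab.1 v ∧ G.Adj ab.2 v}).ncard ≤ 7 := by
        have := hlight p₀ hp₀A
        rw [hp₀] at this
        exact this
      have hfin : ({v | G.Adj ab.1 v ∧ G.Adj ab.2 v}).Finite := Set.toFinite _
      rw [Set.ncard_eq_toFinset_card _ hfin] at hncard
      refine le_trans (Finset.card_le_card_of_injOn w ?_ ?_) hncard
      · intro p hp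
        rw [Finset.mem_coe, Finset.mem_filter] at hp
        rw [Finset.mem_coe, Set.Finite.mem_toFinset]
        have := hcn p hp.1
        rw [hp.2] at this
        exact this
      · intro p hp p' hp' hw
        rw [Finset.mem_coe, Finset.mem_filter] at hp hp'
        exact hrec p p' (hp.2.trans hp'.2.symm) hw
    calc A.card ≤ 7 * (A.image g).card := hb
      _ ≤ 7 * (n * n) := by
          have h2 : (A.image g).card ≤ n * n := by
            simpa using Finset.card_le_univ (A.image g)
          omega
      _ = 7 * n ^ 2 := by ring
  set A1 := Tri.filter (fun p => edgeTriangleDeg G p.1 p.2.1 ≤ 7) with hA1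
  set A2 := Tri.filter (fun p => edgeTriangleDeg G p.1 p.2.2 ≤ 7) with hA2
  set A3 := Tri.filter (fun p => edgeTriangleDeg G p.2.1 p.2.2 ≤ 7) with hA3
  set Hv := Tri.filter (fun p => ¬ edgeTriangleDeg G p.1 p.2.1 ≤ 7 ∧
      ¬ edgeTriangleDeg G p.1 p.2.2 ≤ 7 ∧ ¬ edgeTriangleDeg G p.2.1 p.2.2 ≤ 7) with hHv
  have memTri : ∀ p ∈ Tri, G.Adj p.1 p.2.1 ∧ G.Adj p.1 p.2.2 ∧ G.Adj p.2.1 p.2.2 := by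
    intro p hp
    rw [hTridef, Finset.mem_filter] at hp
    exact hp.2
  have hbA1 : A1.card ≤ 7 * n ^ 2 := by
    apply light (fun p => (p.1, p.2.1)) (fun p => p.2.2)
    · intro p hp; rw [hA1, Finset.mem_filter] at hp; exact hp.2
    · intro p hp
      rw [hA1, Finset.mem_filter] at hp
      have h := memTri p hp.1
      exact ⟨h.2.1, h.2.2⟩
    · intro p p' hg hw
      rw [Prod.mk.injEq] at hg
      exact Prod.ext hg.1 (Prod.ext hg.2 hw)
  have hbA2 : A2.card ≤ 7 * n ^ 2 := by
    apply light (fun p => (p.1, p.2.2)) (fun p => p.2.1)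
    · intro p hp; rw [hA2, Finset.mem_filter] at hp; exact hp.2
    · intro p hp
      rw [hA2, Finset.mem_filter] at hp
      have h := memTri p hp.1
      exact ⟨h.1, h.2.2.symm⟩
    · intro p p' hg hw
      rw [Prod.mk.injEq] at hg
      exact Prod.ext hg.1 (Prod.ext hw hg.2)
  have hbA3 : A3.card ≤ 7 * n ^ 2 := by
    apply light (fun p => (p.2.1, p.2.2)) (fun p => p.1)
    · intro p hp; rw [hA3, Finset.mem_filter] at hp; exact hp.2
    · intro p hp
      rw [hA3, Finset.mem_filter] at hp
      have h := memTri p hp.1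
      exact ⟨h.1.symm, h.2.1.symm⟩
    · intro p p' hg hw
      rw [Prod.mk.injEq] at hg
      exact Prod.ext hw (Prod.ext hg.1 hg.2)
  have hbHv : Hv.card ≤ n ^ 2 := by
    have : Hv.card ≤ (Finset.univ : Finset (Fin n × Fin n)).card := by
      apply Finset.card_le_card_of_injOn (fun p => (p.1, p.2.1))
      · intro p hp; exact Finset.mem_univ _
      · rintro ⟨u, v, w⟩ hp ⟨u', v', w'⟩ hp' heq
        rw [Finset.mem_coe, hHv, Finset.mem_filter] at hp hp'
        obtain ⟨hpT, hq1, hq2, hq3⟩ := hp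
        obtain ⟨hpT', hq1', hq2', hq3'⟩ := hp'
        have hadjp := memTri _ hpT
        have hadjp' := memTri _ hpT'
        simp only [Prod.mk.injEq] at heq ⊢
        obtain ⟨h1, h2⟩ := heq
        subst h1; subst h2
        refine ⟨rfl, rfl, ?_⟩
        by_contra hne
        simp only at hadjp hadjp' hq1 hq2 hq3 hq1' hq2' hq3'
        have huv : G.Adj u v := hadjp.1
        have huw : G.Adj u w := hadjp.2.1
        have hvw : G.Adj v w := hadjp.2.2
        have huw' : G.Adj u w' := hadjp'.2.1
        have hvw' : G.Adj v w' := hadjp'.2.2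
        have e0 : 8 ≤ edgeTriangleDeg G u w := by omega
        have e1 : 8 ≤ edgeTriangleDeg G w v := by rw [deg_comm]; omega
        have e2 : 8 ≤ edgeTriangleDeg G v w' := by omega
        have e3 : 8 ≤ edgeTriangleDeg G w' u := by rw [deg_comm]; omega
        exact noHeavyC4 hG ![u, w, v, w']
          (inj4 huw.ne huv.ne huw'.ne hvw.ne' hne hvw'.ne)
          (cyc4 G.Adj u w v w' huw hvw.symm hvw' huw'.symm)
          (cyc4 (fun x y => 8 ≤ edgeTriangleDeg G x y) u w v w' e0 e1 e2 e3)
    have h2 : (Finset.univ : Finset (Fin n × Fin n)).card = n * n := by simp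
    rw [h2] at this
    calc Hv.card ≤ n * n := this
      _ = n ^ 2 := by ring
  have hsplit : Tri ⊆ A1 ∪ A2 ∪ A3 ∪ Hv := by
    intro p hp
    simp only [hA1, hA2, hA3, hHv, Finset.mem_union, Finset.mem_filter]
    by_cases c1 : edgeTriangleDeg G p.1 p.2.1 ≤ 7
    · tauto
    by_cases c2 : edgeTriangleDeg G p.1 p.2.2 ≤ 7
    · tauto
    by_cases c3 : edgeTriangleDeg G p.2.1 p.2.2 ≤ 7
    · tauto
    · tauto
  calc T.card ≤ Tri.card := h1
    _ ≤ (A1 ∪ A2 ∪ A3 ∪ Hv).card := Finset.card_le_card hsplit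
    _ ≤ A1.card + A2.card + A3.card + Hv.card := by
        refine le_trans (Finset.card_union_le _ _) ?_
        have := Finset.card_union_le (A1 ∪ A2) A3
        have := Finset.card_union_le A1 A2
        omega
    _ ≤ 7 * n ^ 2 + 7 * n ^ 2 + 7 * n ^ 2 + n ^ 2 := by omega
    _ = 22 * n ^ 2 := by ring

private lemma ex_bound (n : ℕ) : exTriangles n C4expansion ≤ 22 * n ^ 2 := by
  rw [exTriangles]
  apply csSup_le'
  rintro k ⟨G, hfree, rfl⟩
  exact main_bound hfree

/-- There is a constant `C > 0` with `ex(n, K₃, C₄^△) ≤ C·n²` for all `n`. -/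
theorem stmt8 : ∃ C : ℝ, 0 < C ∧ ∀ n : ℕ,
    (exTriangles n C4expansion : ℝ) ≤ C * (n : ℝ) ^ 2 := by
  refine ⟨22, by norm_num, fun n => ?_⟩
  have h := ex_bound n
  have : (exTriangles n C4expansion : ℝ) ≤ ((22 * n ^ 2 : ℕ) : ℝ) := Nat.cast_le.mpr h
  push_cast at this
  linarith
end

section
/- Assume the Setup and n ≥ 2400. Then there do not exist a vertex v ∈ V' and two vertex-disjoint edges e1, e2 of G with all four endpoints in V' such that v forms a triangle of G with each of e1 and e2 and each of e1, e2 contains at least one vertex of D. -/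
open SimpleGraph

section Helpers

private def eidx (e : Sym2 (Fin 4)) : Fin 4 :=
  if (0 : Fin 4) ∈ e then (if (1 : Fin 4) ∈ e then 0 else 3)
  else if (1 : Fin 4) ∈ e then 1 else 2

private lemma eidx_spec : ∀ e ∈ (cycleGraph 4).edgeSet, e = s(eidx e, eidx e + 1) := by
  intro e he
  induction e with
  | _ i j =>
    rw [SimpleGraph.mem_edgeSet] at he
    fin_cases i <;> fin_cases j <;> revert he <;> decide

private lemma contains_c4exp {n : ℕ} (G : SimpleGraph (Fin n))
    (c w : Fin 4 → Fin n)
    (hadj : ∀ i : Fin 4, G.Adj (c i) (c (i + 1)))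
    (hw1 : ∀ i, G.Adj (c i) (w i)) (hw2 : ∀ i, G.Adj (c (i + 1)) (w i))
    (hinj : Function.Injective (Sum.elim c w)) :
    Contains C4expansion G := by
  have cyc : ∀ u v : Fin 4, (cycleGraph 4).Adj u v → G.Adj (c u) (c v) := by
    intro u v h
    rw [cycleGraph_adj] at h
    rcases h with h | h
    · have : u = v + 1 := by rw [sub_eq_iff_eq_add] at h; rw [h, add_comm]
      subst this; exact (hadj v).symm
    · have : v = u + 1 := by rw [sub_eq_iff_eq_add] at h; rw [h, add_comm]
      subst this; exact hadj u
  have key : ∀ (u : Fin 4) (e : (cycleGraph 4).edgeSet), u ∈ (e : Sym2 (Fin 4)) →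
      G.Adj (c u) (w (eidx e.1)) := by
    rintro u ⟨e, he⟩ hu
    have hs := eidx_spec e he
    simp only at hu ⊢
    rw [hs, Sym2.mem_iff] at hu
    rcases hu with rfl | rfl
    · exact hw1 _
    · exact hw2 _
  refine ⟨⟨fun a => Sum.elim c w (Sum.map id (fun e => eidx e.1) a), ?_⟩, ?_⟩
  · rintro a b hab
    obtain ⟨hne, h | h⟩ := hab
    · rcases h with ⟨u, v', rfl, rfl, h⟩ | ⟨u, e, rfl, rfl, h⟩
      · exact cyc u v' h
      · exact key u e h
    · rcases h with ⟨u, v', rfl, rfl, h⟩ | ⟨u, e, rfl, rfl, h⟩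
      · exact (cyc u v' h).symm
      · exact (key u e h).symm
  · have gi : Function.Injective
        (Sum.map (id : Fin 4 → Fin 4) (fun e : (cycleGraph 4).edgeSet => eidx e.1)) := by
      rintro (i | ⟨e, he⟩) (j | ⟨e', he'⟩) h <;> simp_all
      rw [eidx_spec e he, eidx_spec e' he', h]
    exact hinj.comp gi

private lemma inj8 {α : Type*} (c w : Fin 4 → α)
    (h01 : c 0 ≠ c 1) (h02 : c 0 ≠ c 2) (h03 : c 0 ≠ c 3) (h04 : c 0 ≠ w 0)
    (h05 : c 0 ≠ w 1) (h06 : c 0 ≠ w 2) (h07 : c 0 ≠ w 3)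
    (h12 : c 1 ≠ c 2) (h13 : c 1 ≠ c 3) (h14 : c 1 ≠ w 0) (h15 : c 1 ≠ w 1)
    (h16 : c 1 ≠ w 2) (h17 : c 1 ≠ w 3) (h23 : c 2 ≠ c 3)
    (h24 : c 2 ≠ w 0) (h25 : c 2 ≠ w 1) (h26 : c 2 ≠ w 2) (h27 : c 2 ≠ w 3)
    (h34 : c 3 ≠ w 0) (h35 : c 3 ≠ w 1) (h36 : c 3 ≠ w 2)
    (h37 : c 3 ≠ w 3) (h45 : w 0 ≠ w 1) (h46 : w 0 ≠ w 2) (h47 : w 0 ≠ w 3)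
    (h56 : w 1 ≠ w 2) (h57 : w 1 ≠ w 3) (h67 : w 2 ≠ w 3) :
    Function.Injective (Sum.elim c w) := by
  intro p q hpq
  fin_cases p <;> fin_cases q <;> simp_all

private lemma stmt11_aux {n : ℕ} (G : SimpleGraph (Fin n))
    (hfree : _root_.Free C4expansion G)
    (x v a1 b1 a2 b2 : Fin n)
    (hvx : v ≠ x) (hb1x : b1 ≠ x) (hb2x : b2 ≠ x)
    (he1 : G.Adj a1 b1) (he2 : G.Adj a2 b2)
    (h12 : a1 ≠ a2) (h1b2 : a1 ≠ b2) (hb1a2 : b1 ≠ a2) (hb1b2 : b1 ≠ b2)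
    (hva1 : G.Adj v a1) (hvb1 : G.Adj v b1) (hva2 : G.Adj v a2) (hvb2 : G.Adj v b2)
    (ha1x : G.Adj a1 x) (ha2x : G.Adj a2 x)
    (hd1 : 12 ≤ edgeTriangleDeg G a1 x) (hd2 : 12 ≤ edgeTriangleDeg G a2 x) : False := by
  have step : ∀ (a : Fin n) (s : Set (Fin n)) (k : ℕ),
      s.ncard ≤ k → (insert a s).ncard ≤ k + 1 :=
    fun a s k h => (Set.ncard_insert_le a s).trans (by omega)
  set T : Set (Fin n) := {x, a1, v, a2, b1, b2} with hTdef
  have hT : T.ncard ≤ 6 := by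
    apply step; apply step; apply step; apply step; apply step
    simp
  -- pick w0
  have hlt0 : T.ncard < ({w : Fin n | G.Adj a1 w ∧ G.Adj x w}).ncard := by
    have : 12 ≤ ({w : Fin n | G.Adj a1 w ∧ G.Adj x w}).ncard := hd1
    omega
  obtain ⟨w0, hw0S, hw0T⟩ := Set.exists_mem_notMem_of_ncard_lt_ncard hlt0
  have hlt3 : (insert w0 T).ncard < ({w : Fin n | G.Adj a2 w ∧ G.Adj x w}).ncard := by
    have h7 : (insert w0 T).ncard ≤ 7 := step _ _ _ hT
    have : 12 ≤ ({w : Fin n | G.Adj a2 w ∧ G.Adj x w}).ncard := hd2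
    omega
  obtain ⟨w3, hw3S, hw3T⟩ := Set.exists_mem_notMem_of_ncard_lt_ncard hlt3
  obtain ⟨hw0a1, hw0x⟩ := hw0S
  obtain ⟨hw3a2, hw3x⟩ := hw3S
  simp only [hTdef, Set.mem_insert_iff, Set.mem_singleton_iff, not_or] at hw0T hw3T
  obtain ⟨hw0nx, hw0na1, hw0nv, hw0na2, hw0nb1, hw0nb2⟩ := hw0T
  obtain ⟨hw3nw0, hw3nx, hw3na1, hw3nv, hw3na2, hw3nb1, hw3nb2⟩ := hw3T
  apply hfree
  refine contains_c4exp G ![x, a1, v, a2] ![w0, b1, b2, w3] ?_ ?_ ?_ ?_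
  · intro i; fin_cases i
    · exact ha1x.symm
    · exact hva1.symm
    · exact hva2
    · exact ha2x
  · intro i; fin_cases i
    · exact hw0x
    · exact he1
    · exact hvb2
    · exact hw3a2
  · intro i; fin_cases i
    · exact hw0a1
    · exact hvb1
    · exact he2
    · exact hw3x
  · apply inj8 <;>
      simp only [Matrix.cons_val_zero, Matrix.cons_val_one, Matrix.head_cons,
        Matrix.cons_val_two, Matrix.tail_cons, Matrix.cons_val_three]
    · exact ha1x.ne'
    · exact hvx.symm
    · exact ha2x.ne'
    · exact Ne.symm hw0nx
    · exact hb1x.symm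
    · exact hb2x.symm
    · exact Ne.symm hw3nx
    · exact hva1.ne'
    · exact h12
    · exact Ne.symm hw0na1
    · exact he1.ne
    · exact h1b2
    · exact Ne.symm hw3na1
    · exact hva2.ne
    · exact Ne.symm hw0nv
    · exact hvb1.ne
    · exact hvb2.ne
    · exact Ne.symm hw3nv
    · exact Ne.symm hw0na2
    · exact hb1a2.symm
    · exact he2.ne
    · exact Ne.symm hw3na2
    · exact hw0nb1
    · exact hw0nb2
    · exact Ne.symm hw3nw0
    · exact hb1b2
    · exact Ne.symm hw3nb1
    · exact Ne.symm hw3nb2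

end Helpers

/-- Under the Setup with `n ≥ 2400`, there do not exist a vertex `v ∈ V'` and
two vertex-disjoint edges `e₁ = a₁b₁`, `e₂ = a₂b₂` of `G` with all endpoints in `V'` such
that `v` forms a triangle with each of `e₁, e₂`, and each of `e₁, e₂` meets `D`. -/
theorem stmt11 (n : ℕ) (hn : 2400 ≤ n) (δ : ℝ) (hδ : 0 < δ)
    (G : SimpleGraph (Fin n)) (hfree : _root_.Free C4expansion G)
    (hedgetri : ∀ u v : Fin n, G.Adj u v → ∃ w : Fin n, G.Adj u w ∧ G.Adj v w)
    (x : Fin n) (V1 V2 : Set (Fin n))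
    (hdisj : Disjoint V1 V2) (hunion : V1 ∪ V2 = {x}ᶜ)
    (hmax : ∀ W1 W2 : Set (Fin n), Disjoint W1 W2 → W1 ∪ W2 = {x}ᶜ →
      crossEdges G W1 W2 ≤ crossEdges G V1 V2)
    (hlarge : (n : ℝ) ^ 2 / 4 - 2 * δ * (n : ℝ) ^ 2 ≤ (crossEdges G V1 V2 : ℝ))
    (D : Set (Fin n))
    (hD : D = {v : Fin n | v ≠ x ∧ G.Adj v x ∧
      (n : ℝ) / 200 ≤ (edgeTriangleDeg G v x : ℝ)}) :
    ¬ ∃ v a1 b1 a2 b2 : Fin n,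
      v ≠ x ∧ a1 ≠ x ∧ b1 ≠ x ∧ a2 ≠ x ∧ b2 ≠ x ∧
      G.Adj a1 b1 ∧ G.Adj a2 b2 ∧
      a1 ≠ a2 ∧ a1 ≠ b2 ∧ b1 ≠ a2 ∧ b1 ≠ b2 ∧
      G.Adj v a1 ∧ G.Adj v b1 ∧ G.Adj v a2 ∧ G.Adj v b2 ∧
      (a1 ∈ D ∨ b1 ∈ D) ∧ (a2 ∈ D ∨ b2 ∈ D) := by
  rintro ⟨v, a1, b1, a2, b2, hvx, ha1x, hb1x, ha2x, hb2x, he1, he2,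
    h12, h1b2, hb1a2, hb1b2, hva1, hvb1, hva2, hvb2, hD1, hD2⟩
  subst hD
  have hdeg : ∀ u : Fin n, (n : ℝ) / 200 ≤ (edgeTriangleDeg G u x : ℝ) →
      12 ≤ edgeTriangleDeg G u x := by
    intro u h
    have h12 : (12 : ℝ) ≤ (edgeTriangleDeg G u x : ℝ) := by
      refine le_trans ?_ h
      have : (2400 : ℝ) ≤ (n : ℝ) := by exact_mod_cast hn
      linarith
    exact_mod_cast h12
  simp only [Set.mem_setOf_eq] at hD1 hD2
  rcases hD1 with ⟨_, ha1adj, ha1d⟩ | ⟨_, hb1adj, hb1d⟩ <;>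
    rcases hD2 with ⟨_, ha2adj, ha2d⟩ | ⟨_, hb2adj, hb2d⟩
  · exact stmt11_aux G hfree x v a1 b1 a2 b2 hvx hb1x hb2x he1 he2
      h12 h1b2 hb1a2 hb1b2 hva1 hvb1 hva2 hvb2 ha1adj ha2adj
      (hdeg _ ha1d) (hdeg _ ha2d)
  · exact stmt11_aux G hfree x v a1 b1 b2 a2 hvx hb1x ha2x he1 he2.symm
      h1b2 h12 hb1b2 hb1a2 hva1 hvb1 hvb2 hva2 ha1adj hb2adj
      (hdeg _ ha1d) (hdeg _ hb2d)
  · exact stmt11_aux G hfree x v b1 a1 a2 b2 hvx ha1x hb2x he1.symm he2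
      hb1a2 hb1b2 h12 h1b2 hvb1 hva1 hva2 hvb2 hb1adj ha2adj
      (hdeg _ hb1d) (hdeg _ ha2d)
  · exact stmt11_aux G hfree x v b1 a1 b2 a2 hvx ha1x ha2x he1.symm he2.symm
      hb1b2 hb1a2 h1b2 h12 hvb1 hva1 hvb2 hva2 hb1adj hb2adj
      (hdeg _ hb1d) (hdeg _ hb2d)
end

section
/- There exist δ0 > 0 and n0 ∈ ℕ such that the following holds for all 0 < δ ≤ δ0 and n ≥ n0. Assume the Setup and the triangle-set definitions, and assume in addition that the number of edges e of G with one endpoint in V1 and one in V2 such that e together with x spans a triangle of G is at least n²/4 − 3δn². Then |ℳ1| ≥ (49/100)·n·|D̄| and |D̄| ≤ 8δn. -/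
open SimpleGraph

set_option maxHeartbeats 1000000

lemma aux_card_triple {α : Type*} [DecidableEq α] {a b c : α} (hab : a ≠ b) (hac : a ≠ c)
    (hbc : b ≠ c) : ({a, b, c} : Finset α).card = 3 := by
  rw [Finset.card_insert_of_notMem (by simp [hab, hac]),
    Finset.card_insert_of_notMem (by simp [hbc]), Finset.card_singleton]

lemma aux_ncard_prod {α β : Type*} (A : Set α) (B : Set β) :
    (A ×ˢ B).ncard = A.ncard * B.ncard := by
  rw [← Nat.card_coe_set_eq, ← Nat.card_coe_set_eq, ← Nat.card_coe_set_eq,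
    Nat.card_congr (Equiv.Set.prod A B), Nat.card_prod]

lemma aux_subset_prod {α β : Type*} [Finite α] [Finite β] {P : Set (α × β)} {A : Set α}
    {B : Set β} (h : P ⊆ A ×ˢ B) : P.ncard ≤ A.ncard * B.ncard :=
  le_of_le_of_eq (Set.ncard_le_ncard h (Set.toFinite _)) (aux_ncard_prod A B)

lemma aux_fiber_count {α β : Type*} [DecidableEq α] [DecidableEq β]
    (A : Finset α) (B : Finset β) (r : α → β → Prop) [∀ a b, Decidable (r a b)] (m : ℝ)
    (hm : ∀ a ∈ A, ((B.filter (fun b => r a b)).card : ℝ) ≤ m) :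
    (A.card : ℝ) * ((B.card : ℝ) - m)
      ≤ (((A ×ˢ B).filter (fun p => ¬ r p.1 p.2)).card : ℝ) := by
  have hcard : ((A ×ˢ B).filter (fun p => ¬ r p.1 p.2)).card
      = ∑ a ∈ A, (B.filter (fun b => ¬ r a b)).card := by
    rw [Finset.card_eq_sum_card_fiberwise (f := Prod.fst) (t := A)
      (fun p hp => (Finset.mem_product.mp (Finset.mem_filter.mp hp).1).1)]
    refine Finset.sum_congr rfl (fun a ha => ?_)
    have hset : ((A ×ˢ B).filter (fun p => ¬ r p.1 p.2)).filter (fun p => p.1 = a)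
        = {a} ×ˢ (B.filter (fun b => ¬ r a b)) := by
      ext ⟨p1, p2⟩
      simp only [Finset.mem_filter, Finset.mem_product, Finset.mem_singleton]
      constructor
      · rintro ⟨⟨⟨h1, h2⟩, h3⟩, h4⟩
        subst h4
        exact ⟨rfl, h2, h3⟩
      · rintro ⟨h4, h2, h3⟩
        subst h4
        exact ⟨⟨⟨ha, h2⟩, h3⟩, rfl⟩
    rw [hset, Finset.card_product, Finset.card_singleton, one_mul]
  rw [hcard]
  push_cast
  have hterm : ∀ a ∈ A, (B.card : ℝ) - m ≤ ((B.filter (fun b => ¬ r a b)).card : ℝ) := by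
    intro a ha
    have hsplit : (B.filter (fun b => r a b)).card + (B.filter (fun b => ¬ r a b)).card
        = B.card := Finset.card_filter_add_card_filter_not _
    have hc : ((B.filter (fun b => r a b)).card : ℝ)
        + ((B.filter (fun b => ¬ r a b)).card : ℝ) = (B.card : ℝ) := by exact_mod_cast hsplit
    linarith [hm a ha]
  calc (A.card : ℝ) * ((B.card : ℝ) - m) = ∑ _a ∈ A, ((B.card : ℝ) - m) := by
        rw [Finset.sum_const, nsmul_eq_mul]
    _ ≤ ∑ a ∈ A, ((B.filter (fun b => ¬ r a b)).card : ℝ) := Finset.sum_le_sum hterm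


lemma aux_numeric (d N s1 s2 q m1 k1 k2 k : ℝ)
    (hd : 0 < d) (hd0 : d ≤ 1 / 1000000) (hN0 : 10000 ≤ N)
    (hsum : s1 + s2 = N - 1)
    (hB : N ^ 2 / 4 - 2 * d * N ^ 2 ≤ s1 * s2)
    (hupper : m1 + q ≤ s1 * s2)
    (hgood : N ^ 2 / 4 - 3 * d * N ^ 2 ≤ q)
    (hk1 : 0 ≤ k1) (hk2 : 0 ≤ k2) (hksum : k = k1 + k2) (hkub : k ≤ N)
    (hlow : k1 * (s2 - N / 200) + k2 * (s1 - N / 200) - k1 * k2 ≤ m1) :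
    49 / 100 * N * k ≤ m1 ∧ k ≤ 8 * d * N := by
  have hNpos : (0 : ℝ) < N := by linarith
  have hknn : 0 ≤ k := by linarith [hksum]
  have hdN : 0 ≤ d * N := mul_nonneg (le_of_lt hd) (le_of_lt hNpos)
  have hNk : 0 ≤ N * k := mul_nonneg (le_of_lt hNpos) hknn
  have hss : s1 * s2 ≤ N ^ 2 / 4 := by nlinarith [sq_nonneg (s1 - s2), hN0]
  have hm1ub : m1 ≤ 3 * d * N ^ 2 := by linarith
  have hdiff2 : (s1 - s2) ^ 2 ≤ 8 / 1000000 * N ^ 2 := by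
    have h0 : (0 : ℝ) ≤ (1 / 1000000 - d) * N ^ 2 :=
      mul_nonneg (by linarith) (sq_nonneg N)
    nlinarith [hB, hN0]
  have hs1 : 4985 / 10000 * N ≤ s1 := by nlinarith [hdiff2, hN0]
  have hs2 : 4985 / 10000 * N ≤ s2 := by nlinarith [hdiff2, hN0]
  have hcon1 : 4935 / 10000 * N ≤ s2 - N / 200 := by linarith
  have hcon2 : 4935 / 10000 * N ≤ s1 - N / 200 := by linarith
  have hlow3 : 4935 / 10000 * N * k - k1 * k2 ≤ m1 := by
    have h1 := mul_le_mul_of_nonneg_left hcon1 hk1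
    have h2 := mul_le_mul_of_nonneg_left hcon2 hk2
    have h3 : 4935 / 10000 * N * k = k1 * (4935 / 10000 * N) + k2 * (4935 / 10000 * N) := by
      rw [hksum]; ring
    linarith
  have hk1k2 : k1 * k2 ≤ k ^ 2 / 4 := by nlinarith [sq_nonneg (k1 - k2)]
  have hkk : k ^ 2 / 4 ≤ N * k / 4 := by nlinarith [mul_le_mul_of_nonneg_right hkub hknn]
  have h2 : (2435 / 10000 * k) * N ≤ (3 * d * N) * N := by nlinarith [hlow3, hm1ub, hk1k2, hkk]
  have h4 : 2435 / 10000 * k ≤ 3 * d * N := le_of_mul_le_mul_right h2 hNpos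
  have hboot : k ≤ 125 / 10 * d * N := by linarith
  have hk1k2small : k1 * k2 ≤ 35 / 10000 * N * k := by
    have h5 : k * k ≤ (125 / 10 * d * N) * k := mul_le_mul_of_nonneg_right hboot hknn
    have h6 : d * (N * k) ≤ (1 / 1000000) * (N * k) :=
      mul_le_mul_of_nonneg_right (by linarith) hNk
    nlinarith [hk1k2, h5, h6, hNk]
  have hfinal1 : 49 / 100 * N * k ≤ m1 := by linarith [hlow3, hk1k2small]
  have h7 : (49 / 100 * k) * N ≤ (3 * d * N) * N := by nlinarith [hfinal1, hm1ub]
  have h8 : 49 / 100 * k ≤ 3 * d * N := le_of_mul_le_mul_right h7 hNpos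
  exact ⟨hfinal1, by linarith [h8, hdN]⟩

/-- There exist `δ₀ > 0` and `n₀` such that for all `0 < δ ≤ δ₀` and `n ≥ n₀`,
under the Setup and the triangle-set definitions, if the number of edges between `V₁` and
`V₂` spanning a triangle with `x` is at least `n²/4 - 3δn²`, then
`|ℳ₁| ≥ (49/100)·n·|D̄|` and `|D̄| ≤ 8δn`. -/
theorem stmt12 : ∃ δ0 : ℝ, 0 < δ0 ∧ ∃ n0 : ℕ,
    ∀ δ : ℝ, 0 < δ → δ ≤ δ0 → ∀ n : ℕ, n0 ≤ n →
    ∀ G : SimpleGraph (Fin n), _root_.Free C4expansion G →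
    (∀ u v : Fin n, G.Adj u v → ∃ w : Fin n, G.Adj u w ∧ G.Adj v w) →
    ∀ (x : Fin n) (V1 V2 : Set (Fin n)),
    Disjoint V1 V2 → V1 ∪ V2 = {x}ᶜ →
    (∀ W1 W2 : Set (Fin n), Disjoint W1 W2 → W1 ∪ W2 = {x}ᶜ →
      crossEdges G W1 W2 ≤ crossEdges G V1 V2) →
    ((n : ℝ) ^ 2 / 4 - 2 * δ * (n : ℝ) ^ 2 ≤ (crossEdges G V1 V2 : ℝ)) →
    ∀ D : Set (Fin n),
    D = {v : Fin n | v ≠ x ∧ G.Adj v x ∧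
      (n : ℝ) / 200 ≤ (edgeTriangleDeg G v x : ℝ)} →
    ∀ Dbar : Set (Fin n), Dbar = ({x}ᶜ : Set (Fin n)) \ D →
    ∀ S : SimpleGraph (Fin n),
    S = SimpleGraph.fromRel (fun u v => u = x ∨ (u ∈ V1 ∧ v ∈ V2)) →
    ∀ calM1 : Set (Finset (Fin n)),
    calM1 = {s : Finset (Fin n) |
      (S.IsNClique 3 s ∧ ¬ G.IsNClique 3 s) ∧ ∃ v ∈ s, v ∈ Dbar} →
    -- the additional assumption on edges of `G` between `V1` and `V2` forming a triangle
    -- with `x`: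
    ((n : ℝ) ^ 2 / 4 - 3 * δ * (n : ℝ) ^ 2
        ≤ ({p : Fin n × Fin n | p.1 ∈ V1 ∧ p.2 ∈ V2 ∧ G.Adj p.1 p.2 ∧
            G.Adj p.1 x ∧ G.Adj p.2 x}.ncard : ℝ)) →
    ((49 / 100 : ℝ) * (n : ℝ) * (Dbar.ncard : ℝ) ≤ (calM1.ncard : ℝ) ∧
      (Dbar.ncard : ℝ) ≤ 8 * δ * (n : ℝ)) := by
  classical
  refine ⟨1/1000000, by norm_num, 10000, ?_⟩
  intro δ hδ hδ0 n hn G _hfree _hedge x V1 V2 hdisj hunion _hmax hcross D hD Dbar hDbar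
    S hS calM1 hM1 hgood
  set N : ℝ := (n : ℝ) with hN
  have hN0 : (10000 : ℝ) ≤ N := by rw [hN]; exact_mod_cast hn
  have hNpos : (0 : ℝ) < N := by linarith
  -- basic membership facts
  have hx1 : x ∉ V1 := fun h => by
    have : x ∈ ({x}ᶜ : Set (Fin n)) := hunion ▸ Set.mem_union_left _ h
    simp at this
  have hx2 : x ∉ V2 := fun h => by
    have : x ∈ ({x}ᶜ : Set (Fin n)) := hunion ▸ Set.mem_union_right _ h
    simp at this
  have hd : ∀ y : Fin n, y ∈ V1 → y ∈ V2 → False :=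
    fun y h1 h2 => Set.disjoint_left.mp hdisj h1 h2
  have hne1 : ∀ v ∈ V1, v ≠ x := fun v hv => by
    have : v ∈ ({x}ᶜ : Set (Fin n)) := hunion ▸ Set.mem_union_left _ hv
    simpa using this
  have hne2 : ∀ v ∈ V2, v ≠ x := fun v hv => by
    have : v ∈ ({x}ᶜ : Set (Fin n)) := hunion ▸ Set.mem_union_right _ hv
    simpa using this
  -- adjacency in S
  have hSadj : ∀ a b : Fin n, S.Adj a b ↔
      a ≠ b ∧ ((a = x ∨ (a ∈ V1 ∧ b ∈ V2)) ∨ (b = x ∨ (b ∈ V1 ∧ a ∈ V2))) := by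
    intro a b; rw [hS]; exact SimpleGraph.fromRel_adj _ a b
  -- S-cliques on cross pairs
  have hSclique : ∀ u v : Fin n, u ∈ V1 → v ∈ V2 → S.IsNClique 3 {x, u, v} := by
    intro u v hu hv
    constructor
    · intro a ha b hb hne
      simp only [Finset.coe_insert, Set.mem_insert_iff, Finset.coe_singleton,
        Set.mem_singleton_iff] at ha hb
      rw [hSadj]
      refine ⟨hne, ?_⟩
      rcases ha with rfl | rfl | rfl <;> rcases hb with rfl | rfl | rfl <;> tauto
    · exact aux_card_triple (Ne.symm (hne1 u hu)) (Ne.symm (hne2 v hv))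
        (fun h => hd u hu (h ▸ hv))
  -- G-cliques from good pairs
  have hGclique : ∀ u v : Fin n, G.Adj u v → G.Adj u x → G.Adj v x →
      G.IsNClique 3 {x, u, v} := by
    intro u v huv hux hvx
    constructor
    · intro a ha b hb hne
      simp only [Finset.coe_insert, Set.mem_insert_iff, Finset.coe_singleton,
        Set.mem_singleton_iff] at ha hb
      rcases ha with rfl | rfl | rfl <;> rcases hb with rfl | rfl | rfl <;>
        first
          | exact absurd rfl hne
          | exact hux.symm
          | exact hvx.symm
          | exact hux
          | exact hvx
          | exact huv
          | exact huv.symm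
    · exact aux_card_triple hux.ne' hvx.ne' huv.ne
  -- extracting adjacencies from a G-clique
  have hGextract : ∀ a w : Fin n, a ≠ x → w ≠ x → a ≠ w → G.IsNClique 3 {x, a, w} →
      G.Adj a w ∧ G.Adj a x ∧ G.Adj x w := by
    intro a w hax hwx haw hcl
    refine ⟨hcl.1 (by simp) (by simp) haw, hcl.1 (by simp) (by simp) hax,
      hcl.1 (by simp) (by simp) (Ne.symm hwx)⟩
  -- structure of S-triangles
  have hcross : ∀ q r : Fin n, q ≠ x → r ≠ x → S.Adj q r →
      (q ∈ V1 ∧ r ∈ V2) ∨ (r ∈ V1 ∧ q ∈ V2) := by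
    intro q r hq hr h
    rw [hSadj] at h
    rcases h.2 with (h' | h') | (h' | h') <;> tauto
  have hStri : ∀ s : Finset (Fin n), S.IsNClique 3 s →
      ∃ u v : Fin n, u ∈ V1 ∧ v ∈ V2 ∧ s = {x, u, v} := by
    intro s hs
    obtain ⟨a, b, c, hab, hac, hbc, rfl⟩ := Finset.card_eq_three.mp hs.2
    have hAB : S.Adj a b := hs.1 (by simp) (by simp) hab
    have hAC : S.Adj a c := hs.1 (by simp) (by simp) hac
    have hBC : S.Adj b c := hs.1 (by simp) (by simp) hbc
    by_cases hax : a = x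
    · subst hax
      rcases hcross b c (Ne.symm hab) (Ne.symm hac) hBC with ⟨h1, h2⟩ | ⟨h1, h2⟩
      · exact ⟨b, c, h1, h2, rfl⟩
      · exact ⟨c, b, h1, h2, by ext y; simp; tauto⟩
    · by_cases hbx : b = x
      · subst hbx
        rcases hcross a c hax (Ne.symm hbc) hAC with ⟨h1, h2⟩ | ⟨h1, h2⟩
        · exact ⟨a, c, h1, h2, by ext y; simp; tauto⟩
        · exact ⟨c, a, h1, h2, by ext y; simp; tauto⟩
      · by_cases hcx : c = x
        · subst hcx
          rcases hcross a b hax hbx hAB with ⟨h1, h2⟩ | ⟨h1, h2⟩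
          · exact ⟨a, b, h1, h2, by ext y; simp; tauto⟩
          · exact ⟨b, a, h1, h2, by ext y; simp; tauto⟩
        · exfalso
          have h1 := hcross a b hax hbx hAB
          have h2 := hcross a c hax hcx hAC
          have h3 := hcross b c hbx hcx hBC
          rcases h1 with ⟨hu, hv⟩ | ⟨hu, hv⟩ <;> rcases h2 with ⟨hu', hv'⟩ | ⟨hu', hv'⟩ <;>
            rcases h3 with ⟨hu'', hv''⟩ | ⟨hu'', hv''⟩ <;>
            first
              | exact hd a hu hv'
              | exact hd a hu' hv
              | exact hd b hu hv''
              | exact hd b hu'' hv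
              | exact hd c hu' hv''
              | exact hd c hu'' hv'
  -- injectivity of triple formation
  have htriple_inj : ∀ u v u' v' : Fin n, u ∈ V1 → v ∈ V2 → u' ∈ V1 → v' ∈ V2 →
      ({x, u, v} : Finset (Fin n)) = {x, u', v'} → u = u' ∧ v = v' := by
    intro u v u' v' hu hv hu' hv' h
    constructor
    · have : u ∈ ({x, u', v'} : Finset (Fin n)) := h ▸ (by simp)
      simp only [Finset.mem_insert, Finset.mem_singleton] at this
      rcases this with h1 | h1 | h1
      · exact absurd h1 (hne1 u hu)
      · exact h1
      · exact absurd (h1 ▸ hv') (fun hh => hd u hu hh)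
    · have : v ∈ ({x, u', v'} : Finset (Fin n)) := h ▸ (by simp)
      simp only [Finset.mem_insert, Finset.mem_singleton] at this
      rcases this with h1 | h1 | h1
      · exact absurd h1 (hne2 v hv)
      · exact absurd (h1 ▸ hu') (fun hh => hd v hh hv)
      · exact h1
  -- Part 1: sizes of V1, V2
  have hcompl : ((({x}ᶜ : Set (Fin n))).ncard : ℝ) = N - 1 := by
    have h1 : ({x} : Set (Fin n)).ncard + (({x}ᶜ : Set (Fin n))).ncard = Nat.card (Fin n) :=
      Set.ncard_add_ncard_compl {x}
    rw [Set.ncard_singleton, Nat.card_eq_fintype_card, Fintype.card_fin] at h1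
    have : (1 : ℝ) + (({x}ᶜ : Set (Fin n))).ncard = N := by rw [hN]; exact_mod_cast h1
    linarith
  have hsum : (V1.ncard : ℝ) + (V2.ncard : ℝ) = N - 1 := by
    have h1 : (V1 ∪ V2).ncard = V1.ncard + V2.ncard :=
      Set.ncard_union_eq hdisj (Set.toFinite _) (Set.toFinite _)
    rw [hunion] at h1
    rw [← hcompl, h1]
    push_cast
    ring
  have hB : N ^ 2 / 4 - 2 * δ * N ^ 2 ≤ (V1.ncard : ℝ) * (V2.ncard : ℝ) := by
    have h1 : crossEdges G V1 V2 ≤ V1.ncard * V2.ncard :=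
      aux_subset_prod (fun p hp => Set.mem_prod.mpr ⟨hp.1, hp.2.1⟩)
    have h2 : (crossEdges G V1 V2 : ℝ) ≤ (V1.ncard : ℝ) * (V2.ncard : ℝ) := by
      exact_mod_cast h1
    linarith
  have hV1c : (0 : ℝ) ≤ (V1.ncard : ℝ) := Nat.cast_nonneg _
  have hV2c : (0 : ℝ) ≤ (V2.ncard : ℝ) := Nat.cast_nonneg _
  -- Part 2: upper bound on |calM1|
  set Q : Set (Fin n × Fin n) := {p : Fin n × Fin n | p.1 ∈ V1 ∧ p.2 ∈ V2 ∧ G.Adj p.1 p.2 ∧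
      G.Adj p.1 x ∧ G.Adj p.2 x} with hQdef
  set Tri : Set (Finset (Fin n)) := {s : Finset (Fin n) | S.IsNClique 3 s} with hTridef
  have hTri : Tri.ncard ≤ V1.ncard * V2.ncard := by
    have hex : ∀ s : Finset (Fin n), ∃ p : Fin n × Fin n,
        S.IsNClique 3 s → (p.1 ∈ V1 ∧ p.2 ∈ V2 ∧ s = {x, p.1, p.2}) := by
      intro s
      by_cases h : S.IsNClique 3 s
      · obtain ⟨u, v, h1, h2, h3⟩ := hStri s h
        exact ⟨(u, v), fun _ => ⟨h1, h2, h3⟩⟩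
      · exact ⟨(x, x), fun h' => absurd h' h⟩
    choose f hf using hex
    have h1 : Tri.ncard ≤ (V1 ×ˢ V2).ncard := by
      refine Set.ncard_le_ncard_of_injOn f
        (fun s hs => Set.mem_prod.mpr ⟨(hf s hs).1, (hf s hs).2.1⟩)
        (fun s hs s' hs' heq => ?_) (Set.toFinite _)
      rw [(hf s hs).2.2, (hf s' hs').2.2, heq]
    exact h1.trans_eq (aux_ncard_prod V1 V2)
  have hupper : calM1.ncard + Q.ncard ≤ V1.ncard * V2.ncard := by
    set ψQ : Set (Finset (Fin n)) :=
      (fun p : Fin n × Fin n => ({x, p.1, p.2} : Finset (Fin n))) '' Q with hψQdef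
    have hψQcard : ψQ.ncard = Q.ncard := by
      refine Set.ncard_image_of_injOn (fun p hp p' hp' heq => ?_)
      obtain ⟨h1, h2⟩ := htriple_inj p.1 p.2 p'.1 p'.2 hp.1 hp.2.1 hp'.1 hp'.2.1 heq
      exact Prod.ext h1 h2
    have hsubM : calM1 ⊆ Tri := fun s hs => by
      rw [hM1] at hs; exact hs.1.1
    have hsubQ : ψQ ⊆ Tri := by
      rintro _ ⟨p, hp, rfl⟩
      exact hSclique p.1 p.2 hp.1 hp.2.1
    have hdisjMQ : Disjoint calM1 ψQ := by
      rw [Set.disjoint_left]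
      rintro s hsM ⟨p, hp, rfl⟩
      rw [hM1] at hsM
      exact hsM.1.2 (hGclique p.1 p.2 hp.2.2.1 hp.2.2.2.1 hp.2.2.2.2)
    calc calM1.ncard + Q.ncard = (calM1 ∪ ψQ).ncard := by
          rw [← hψQcard, Set.ncard_union_eq hdisjMQ (Set.toFinite _) (Set.toFinite _)]
      _ ≤ Tri.ncard := Set.ncard_le_ncard (Set.union_subset hsubM hsubQ) (Set.toFinite _)
      _ ≤ V1.ncard * V2.ncard := hTri
  have hupperR : (calM1.ncard : ℝ) + (Q.ncard : ℝ) ≤ (V1.ncard : ℝ) * (V2.ncard : ℝ) := by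
    exact_mod_cast hupper
  -- Part 3: lower bound via Dbar fibers
  have hDbarmem : ∀ v ∈ Dbar, v ≠ x ∧ v ∉ D := by
    intro v hv
    rw [hDbar] at hv
    exact ⟨by simpa using hv.1, hv.2⟩
  set A1 : Finset (Fin n) := (Set.toFinite (Dbar ∩ V1)).toFinset with hA1def
  set A2 : Finset (Fin n) := (Set.toFinite (Dbar ∩ V2)).toFinset with hA2def
  set B1 : Finset (Fin n) := (Set.toFinite V1).toFinset with hB1def
  set B2 : Finset (Fin n) := (Set.toFinite V2).toFinset with hB2def
  have hA1card : A1.card = (Dbar ∩ V1).ncard := (Set.ncard_eq_toFinset_card _ _).symm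
  have hA2card : A2.card = (Dbar ∩ V2).ncard := (Set.ncard_eq_toFinset_card _ _).symm
  have hB1card : B1.card = V1.ncard := (Set.ncard_eq_toFinset_card _ _).symm
  have hB2card : B2.card = V2.ncard := (Set.ncard_eq_toFinset_card _ _).symm
  -- fiber bounds
  have hdegbound : ∀ a : Fin n, a ∈ Dbar → a ≠ x → G.Adj a x →
      (edgeTriangleDeg G a x : ℝ) < N / 200 := by
    intro a haD hax hadj
    by_contra hcon
    push_neg at hcon
    exact (hDbarmem a haD).2 (hD ▸ ⟨hax, hadj, hcon⟩)
  have hm1fib : ∀ a ∈ A1, ((B2.filter (fun w => G.IsNClique 3 {x, a, w})).card : ℝ)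
      ≤ N / 200 := by
    intro a ha
    rw [hA1def, Set.Finite.mem_toFinset] at ha
    obtain ⟨haD, haV1⟩ := ha
    have hax : a ≠ x := hne1 a haV1
    by_cases hadj : G.Adj a x
    · have hdeg := hdegbound a haD hax hadj
      have hsub : B2.filter (fun w => G.IsNClique 3 {x, a, w})
          ⊆ (Set.toFinite {w : Fin n | G.Adj a w ∧ G.Adj x w}).toFinset := by
        intro w hw
        rw [Finset.mem_filter] at hw
        obtain ⟨hwB, hwcl⟩ := hw
        rw [hB2def, Set.Finite.mem_toFinset] at hwB
        rw [Set.Finite.mem_toFinset]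
        have hwx : w ≠ x := hne2 w hwB
        have haw : a ≠ w := fun h => hd a haV1 (h ▸ hwB)
        obtain ⟨h1, h2, h3⟩ := hGextract a w hax hwx haw hwcl
        exact ⟨h1, h3⟩
      have hcard : (B2.filter (fun w => G.IsNClique 3 {x, a, w})).card
          ≤ edgeTriangleDeg G a x := by
        rw [edgeTriangleDeg, Set.ncard_eq_toFinset_card _ (Set.toFinite _)]
        exact Finset.card_le_card hsub
      calc ((B2.filter (fun w => G.IsNClique 3 {x, a, w})).card : ℝ)
          ≤ (edgeTriangleDeg G a x : ℝ) := by exact_mod_cast hcard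
        _ ≤ N / 200 := le_of_lt hdeg
    · have hempty : B2.filter (fun w => G.IsNClique 3 {x, a, w}) = ∅ := by
        rw [Finset.filter_eq_empty_iff]
        intro w hwB hwcl
        rw [hB2def, Set.Finite.mem_toFinset] at hwB
        have hwx : w ≠ x := hne2 w hwB
        have haw : a ≠ w := fun h => hd a haV1 (h ▸ hwB)
        exact hadj (hGextract a w hax hwx haw hwcl).2.1
      rw [hempty]
      simp
      positivity
  have hm2fib : ∀ a ∈ A2, ((B1.filter (fun w => G.IsNClique 3 {x, w, a})).card : ℝ)
      ≤ N / 200 := by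
    intro a ha
    rw [hA2def, Set.Finite.mem_toFinset] at ha
    obtain ⟨haD, haV2⟩ := ha
    have hax : a ≠ x := hne2 a haV2
    by_cases hadj : G.Adj a x
    · have hdeg := hdegbound a haD hax hadj
      have hsub : B1.filter (fun w => G.IsNClique 3 {x, w, a})
          ⊆ (Set.toFinite {w : Fin n | G.Adj a w ∧ G.Adj x w}).toFinset := by
        intro w hw
        rw [Finset.mem_filter] at hw
        obtain ⟨hwB, hwcl⟩ := hw
        rw [hB1def, Set.Finite.mem_toFinset] at hwB
        rw [Set.Finite.mem_toFinset]
        have hwx : w ≠ x := hne1 w hwB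
        have hwa : w ≠ a := fun h => hd w hwB (h ▸ haV2)
        obtain ⟨h1, h2, h3⟩ := hGextract w a hwx hax hwa hwcl
        exact ⟨h1.symm, h2.symm⟩
      have hcard : (B1.filter (fun w => G.IsNClique 3 {x, w, a})).card
          ≤ edgeTriangleDeg G a x := by
        rw [edgeTriangleDeg, Set.ncard_eq_toFinset_card _ (Set.toFinite _)]
        exact Finset.card_le_card hsub
      calc ((B1.filter (fun w => G.IsNClique 3 {x, w, a})).card : ℝ)
          ≤ (edgeTriangleDeg G a x : ℝ) := by exact_mod_cast hcard
        _ ≤ N / 200 := le_of_lt hdeg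
    · have hempty : B1.filter (fun w => G.IsNClique 3 {x, w, a}) = ∅ := by
        rw [Finset.filter_eq_empty_iff]
        intro w hwB hwcl
        rw [hB1def, Set.Finite.mem_toFinset] at hwB
        have hwx : w ≠ x := hne1 w hwB
        have hwa : w ≠ a := fun h => hd w hwB (h ▸ haV2)
        exact hadj ((hGextract w a hwx hax hwa hwcl).2.2.symm)
      rw [hempty]
      simp
      positivity

  set P1f : Finset (Fin n × Fin n) :=
    (A1 ×ˢ B2).filter (fun p => ¬ G.IsNClique 3 {x, p.1, p.2}) with hP1fdef
  set P2f' : Finset (Fin n × Fin n) :=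
    (A2 ×ˢ B1).filter (fun p => ¬ G.IsNClique 3 {x, p.2, p.1}) with hP2f'def
  set P2f : Finset (Fin n × Fin n) := P2f'.image Prod.swap with hP2fdef
  set Pf : Finset (Fin n × Fin n) := P1f ∪ P2f with hPfdef
  have hP1lb : (A1.card : ℝ) * ((B2.card : ℝ) - N / 200) ≤ (P1f.card : ℝ) :=
    aux_fiber_count A1 B2 (fun a w => G.IsNClique 3 {x, a, w}) (N / 200) hm1fib
  have hP2lb : (A2.card : ℝ) * ((B1.card : ℝ) - N / 200) ≤ (P2f'.card : ℝ) :=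
    aux_fiber_count A2 B1 (fun a w => G.IsNClique 3 {x, w, a}) (N / 200) hm2fib
  have hP2cardeq : P2f.card = P2f'.card :=
    Finset.card_image_of_injective _ Prod.swap_injective
  -- membership description of Pf
  have hPmem : ∀ p : Fin n × Fin n, p ∈ Pf → p.1 ∈ V1 ∧ p.2 ∈ V2 ∧
      ¬ G.IsNClique 3 {x, p.1, p.2} ∧ (p.1 ∈ Dbar ∨ p.2 ∈ Dbar) := by
    intro p hp
    rw [hPfdef, Finset.mem_union] at hp
    rcases hp with hp | hp
    · rw [hP1fdef, Finset.mem_filter, Finset.mem_product] at hp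
      obtain ⟨⟨h1, h2⟩, h3⟩ := hp
      rw [hA1def, Set.Finite.mem_toFinset] at h1
      rw [hB2def, Set.Finite.mem_toFinset] at h2
      exact ⟨h1.2, h2, h3, Or.inl h1.1⟩
    · rw [hP2fdef, Finset.mem_image] at hp
      obtain ⟨q, hq, rfl⟩ := hp
      rw [hP2f'def, Finset.mem_filter, Finset.mem_product] at hq
      obtain ⟨⟨h1, h2⟩, h3⟩ := hq
      rw [hA2def, Set.Finite.mem_toFinset] at h1
      rw [hB1def, Set.Finite.mem_toFinset] at h2
      exact ⟨h2, h1.2, h3, Or.inr h1.1⟩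
  -- Pf injects into calM1
  have hPfM : (Pf.card : ℝ) ≤ (calM1.ncard : ℝ) := by
    have h1 : (↑Pf : Set (Fin n × Fin n)).ncard ≤ calM1.ncard := by
      refine Set.ncard_le_ncard_of_injOn (fun p => ({x, p.1, p.2} : Finset (Fin n)))
        (fun p hp => ?_) (fun p hp p' hp' heq => ?_) (Set.toFinite _)
      · obtain ⟨h1, h2, h3, h4⟩ := hPmem p (Finset.mem_coe.mp hp)
        rw [hM1]
        refine ⟨⟨hSclique p.1 p.2 h1 h2, h3⟩, ?_⟩
        rcases h4 with h4 | h4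
        · exact ⟨p.1, by simp, h4⟩
        · exact ⟨p.2, by simp, h4⟩
      · obtain ⟨ha1, ha2, _, _⟩ := hPmem p (Finset.mem_coe.mp hp)
        obtain ⟨hb1, hb2, _, _⟩ := hPmem p' (Finset.mem_coe.mp hp')
        obtain ⟨h1, h2⟩ := htriple_inj p.1 p.2 p'.1 p'.2 ha1 ha2 hb1 hb2 heq
        exact Prod.ext h1 h2
    rw [Set.ncard_coe_finset] at h1
    exact_mod_cast h1
  -- union/intersection accounting
  have hPunion : Pf.card + (P1f ∩ P2f).card = P1f.card + P2f.card :=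
    Finset.card_union_add_card_inter _ _
  have hinter : (P1f ∩ P2f).card ≤ A1.card * A2.card := by
    have hsub : P1f ∩ P2f ⊆ A1 ×ˢ A2 := by
      intro p hp
      rw [Finset.mem_inter] at hp
      obtain ⟨hp1, hp2⟩ := hp
      rw [hP1fdef, Finset.mem_filter, Finset.mem_product] at hp1
      rw [hP2fdef, Finset.mem_image] at hp2
      obtain ⟨q, hq, hqe⟩ := hp2
      rw [hP2f'def, Finset.mem_filter, Finset.mem_product] at hq
      rw [Finset.mem_product]
      refine ⟨hp1.1.1, ?_⟩
      have : p.2 = q.1 := by rw [← hqe]; rfl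
      rw [this]
      exact hq.1.1
    calc (P1f ∩ P2f).card ≤ (A1 ×ˢ A2).card := Finset.card_le_card hsub
      _ = A1.card * A2.card := Finset.card_product _ _
  -- put lower bound together
  have hlow : (A1.card : ℝ) * ((B2.card : ℝ) - N / 200)
      + (A2.card : ℝ) * ((B1.card : ℝ) - N / 200)
      - (A1.card : ℝ) * (A2.card : ℝ) ≤ (calM1.ncard : ℝ) := by
    have h1 : (Pf.card : ℝ) + ((P1f ∩ P2f).card : ℝ) = (P1f.card : ℝ) + (P2f.card : ℝ) := by
      exact_mod_cast hPunion
    have h2 : ((P1f ∩ P2f).card : ℝ) ≤ (A1.card : ℝ) * (A2.card : ℝ) := by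
      exact_mod_cast hinter
    have h3 : (P2f.card : ℝ) = (P2f'.card : ℝ) := by exact_mod_cast hP2cardeq
    linarith [hP1lb, hP2lb, hPfM]
  -- k accounting
  have hDbarsplit : Dbar = (Dbar ∩ V1) ∪ (Dbar ∩ V2) := by
    rw [← Set.inter_union_distrib_left, hunion]
    rw [Set.inter_eq_self_of_subset_left]
    rw [hDbar]
    exact Set.diff_subset
  have hksum : (Dbar.ncard : ℝ) = ((Dbar ∩ V1).ncard : ℝ) + ((Dbar ∩ V2).ncard : ℝ) := by
    have h1 : (Dbar ∩ V1 ∪ Dbar ∩ V2).ncard = (Dbar ∩ V1).ncard + (Dbar ∩ V2).ncard :=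
      Set.ncard_union_eq
        (hdisj.mono Set.inter_subset_right Set.inter_subset_right)
        (Set.toFinite _) (Set.toFinite _)
    rw [← hDbarsplit] at h1
    exact_mod_cast h1
  have hkub : (Dbar.ncard : ℝ) ≤ N := by
    have h1 : Dbar.ncard ≤ n := by
      have := Set.ncard_le_ncard (Set.subset_univ Dbar) (Set.toFinite _)
      rwa [Set.ncard_univ, Nat.card_eq_fintype_card, Fintype.card_fin] at this
    rw [hN]
    exact_mod_cast h1
  -- final arithmetic
  set k1 : ℝ := ((Dbar ∩ V1).ncard : ℝ) with hk1def
  set k2 : ℝ := ((Dbar ∩ V2).ncard : ℝ) with hk2def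
  set k : ℝ := (Dbar.ncard : ℝ) with hkdef
  set m1 : ℝ := (calM1.ncard : ℝ) with hm1def
  have hk1nn : 0 ≤ k1 := Nat.cast_nonneg _
  have hk2nn : 0 ≤ k2 := Nat.cast_nonneg _
  have hknn : 0 ≤ k := Nat.cast_nonneg _
  have hlow2 : k1 * ((V2.ncard : ℝ) - N / 200) + k2 * ((V1.ncard : ℝ) - N / 200)
      - k1 * k2 ≤ m1 := by
    rw [hk1def, hk2def, ← hA1card, ← hA2card]
    have e1 : ((V1.ncard : ℝ)) = (B1.card : ℝ) := by rw [hB1card]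
    have e2 : ((V2.ncard : ℝ)) = (B2.card : ℝ) := by rw [hB2card]
    rw [e1, e2]
    exact hlow
  exact aux_numeric δ N ((V1.ncard : ℝ)) ((V2.ncard : ℝ)) ((Q.ncard : ℝ)) m1 k1 k2 k
    hδ hδ0 hN0 hsum hB hupperR hgood hk1nn hk2nn hksum hkub hlow2
end

section
/- There exist δ0 > 0 and n0 ∈ ℕ such that the following holds for all 0 < δ ≤ δ0 and n ≥ n0. Assume the Setup. Then for every vertex v ∈ V', min{ |N_G(v) ∩ D1|, |N_G(v) ∩ D2| } ≤ √(3δ)·n. -/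
/-!
Suppose both `N(v) ∩ D₁` and `N(v) ∩ D₂` have more than `√(3δ) n` vertices. The cut `(V₁, V₂)`
misses at most `2δn²` of its at most `(n - 1)² / 4` pairs, so more than a third of the pairs in
`(N(v) ∩ D₁) × (N(v) ∩ D₂)` are edges, and among them are two disjoint edges `d₁d₂`, `d₁'d₂'`.
The 4-cycle `v d₁ x d₁'` then expands to a `C₄^△`: `d₂` and `d₂'` are apexes for `v d₁` and
`v d₁'`, and the edges `d₁x`, `d₁'x`, each in at least `n / 200` triangles, supply the other two.
-/

open SimpleGraph

namespace C4expansion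

/-- The index `i` of the edge `s(i, i + 1)` of the cycle; for `s(3, 0)` the difference
`sup - inf` is `3` in `Fin 4`. -/
def edgeStart (e : Sym2 (Fin 4)) : Fin 4 :=
  if e.sup - e.inf = 1 then e.inf else e.sup

lemma edgeStart_mk (i : Fin 4) : edgeStart s(i, i + 1) = i := by
  fin_cases i <;> rfl

lemma exists_eq_mk_of_mem_edgeSet {e : Sym2 (Fin 4)} (he : e ∈ (cycleGraph 4).edgeSet) :
    ∃ i : Fin 4, e = s(i, i + 1) := by
  induction e using Sym2.ind with
  | _ i j =>
    revert he
    show (cycleGraph 4).Adj i j → ∃ k : Fin 4, s(i, j) = s(k, k + 1)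
    revert i j
    decide

lemma edgeStart_injOn : Set.InjOn edgeStart (cycleGraph 4).edgeSet := by
  intro e he e' he' h
  obtain ⟨i, rfl⟩ := exists_eq_mk_of_mem_edgeSet he
  obtain ⟨j, rfl⟩ := exists_eq_mk_of_mem_edgeSet he'
  rw [edgeStart_mk, edgeStart_mk] at h
  rw [h]

end C4expansion

open C4expansion in
theorem contains_C4expansion {V : Type*} {G : SimpleGraph V} (a b : Fin 4 → V)
    (ha : Function.Injective a) (hb : Function.Injective b) (hab : ∀ i j, a i ≠ b j)
    (hcycle : ∀ i, G.Adj (a i) (a (i + 1))) (hleft : ∀ i, G.Adj (a i) (b i))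
    (hright : ∀ i, G.Adj (a (i + 1)) (b i)) :
    Contains C4expansion G := by
  let f : Fin 4 ⊕ (cycleGraph 4).edgeSet → V := Sum.elim a (fun e => b (edgeStart e))
  have hadj : ∀ p q, (∃ u v, p = .inl u ∧ q = .inl v ∧ (cycleGraph 4).Adj u v) ∨
      (∃ u, ∃ e : (cycleGraph 4).edgeSet, p = .inl u ∧ q = .inr e ∧ u ∈ (e : Sym2 (Fin 4))) →
      G.Adj (f p) (f q) := by
    rintro p q (⟨u, w, rfl, rfl, huw⟩ | ⟨u, ⟨e, he⟩, rfl, rfl, hue⟩)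
    · rcases cycleGraph_adj.mp huw with h | h
      · obtain rfl : u = w + 1 := (sub_eq_iff_eq_add.mp h).trans (add_comm _ _)
        exact (hcycle w).symm
      · obtain rfl : w = u + 1 := (sub_eq_iff_eq_add.mp h).trans (add_comm _ _)
        exact hcycle u
    · obtain ⟨i, rfl⟩ := exists_eq_mk_of_mem_edgeSet he
      simp only [f, Sum.elim_inl, Sum.elim_inr, edgeStart_mk]
      rcases Sym2.mem_iff.mp hue with rfl | rfl
      exacts [hleft u, hright i]
  refine ⟨⟨f, fun {p q} h => ?_⟩, ?_⟩
  · rcases (fromRel_adj _ p q).mp h with ⟨-, h | h⟩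
    exacts [hadj p q h, (hadj q p h).symm]
  · refine ha.sumElim (hb.comp fun e e' h => Subtype.ext (edgeStart_injOn e.2 e'.2 h)) ?_
    exact fun i e => hab i _

lemma injective_vec_four {V : Type*} {a b c d : V} (hab : a ≠ b) (hac : a ≠ c) (had : a ≠ d)
    (hbc : b ≠ c) (hbd : b ≠ d) (hcd : c ≠ d) : Function.Injective ![a, b, c, d] := by
  intro i j h
  fin_cases i <;> fin_cases j <;> simp_all [eq_comm]

lemma exists_adj_adj_notMem_of_card_lt {V : Type*} {G : SimpleGraph V} {u w : V} (s : Finset V)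
    (h : s.card < edgeTriangleDeg G u w) : ∃ z, G.Adj u z ∧ G.Adj w z ∧ z ∉ s := by
  by_contra! hs
  refine h.not_ge ((Set.ncard_le_ncard (t := ↑s) fun z hz => hs z hz.1 hz.2).trans ?_)
  rw [Set.ncard_coe_finset]

/-- The cycle `v d₁ x d₁'`, with apexes `d₂` on `v d₁` and `d₂'` on `d₁' v`, and apexes on
`d₁ x`, `x d₁'` chosen among their many common neighbours. -/
theorem contains_C4expansion_of_two_cross_edges {V : Type*} {G : SimpleGraph V}
    {v x d₁ d₁' d₂ d₂' : V} (hvx : v ≠ x) (hd₁ : d₁ ≠ d₁') (hd₂ : d₂ ≠ d₂')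
    (hd₁d₂' : d₁ ≠ d₂') (hd₁'d₂ : d₁' ≠ d₂) (hxd₂ : x ≠ d₂) (hxd₂' : x ≠ d₂')
    (hv₁ : G.Adj v d₁) (hv₁' : G.Adj v d₁') (hv₂ : G.Adj v d₂) (hv₂' : G.Adj v d₂')
    (hx₁ : G.Adj d₁ x) (hx₁' : G.Adj d₁' x) (h₁₂ : G.Adj d₁ d₂) (h₁₂' : G.Adj d₁' d₂')
    (hdeg : 5 < edgeTriangleDeg G d₁ x) (hdeg' : 5 < edgeTriangleDeg G d₁' x) :
    Contains C4expansion G := by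
  classical
  obtain ⟨w, hw₁, hwx, hw⟩ := exists_adj_adj_notMem_of_card_lt {v, d₁', d₂, d₂'}
    (Finset.card_le_four.trans_lt (by omega : 4 < edgeTriangleDeg G d₁ x))
  obtain ⟨w', hw'₁, hw'x, hw'⟩ := exists_adj_adj_notMem_of_card_lt {v, d₁, d₂, d₂', w}
    (Finset.card_le_five.trans_lt hdeg')
  simp only [Finset.mem_insert, Finset.mem_singleton, not_or] at hw hw'
  refine contains_C4expansion ![v, d₁, x, d₁'] ![d₂, w, w', d₂'] ?_ ?_ ?_ ?_ ?_ ?_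
  · exact injective_vec_four hv₁.ne hvx hv₁'.ne hx₁.ne hd₁ hx₁'.ne'
  · exact injective_vec_four (Ne.symm hw.2.2.1) (Ne.symm hw'.2.2.1) hd₂
      (Ne.symm hw'.2.2.2.2) hw.2.2.2 hw'.2.2.2.1
  · intro i j; fin_cases i <;> fin_cases j
    exacts [hv₂.ne, Ne.symm hw.1, Ne.symm hw'.1, hv₂'.ne, h₁₂.ne, hw₁.ne, Ne.symm hw'.2.1,
      hd₁d₂', hxd₂, hwx.ne, hw'x.ne, hxd₂', hd₁'d₂, Ne.symm hw.2.1, hw'₁.ne, h₁₂'.ne]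
  · intro i; fin_cases i
    exacts [hv₁, hx₁, hx₁'.symm, hv₁'.symm]
  · intro i; fin_cases i
    exacts [hv₂, hw₁, hw'x, h₁₂']
  · intro i; fin_cases i
    exacts [h₁₂, hwx, hw'₁, hv₂']

lemma exists_disjoint_pairs_of_ncard_lt {α β : Type*} [Finite α] [Finite β] {A : Set α}
    {B : Set β} {E : Set (α × β)} (hE : E ⊆ A ×ˢ B) (h : A.ncard + B.ncard < E.ncard) :
    ∃ p ∈ E, ∃ q ∈ E, p.1 ≠ q.1 ∧ p.2 ≠ q.2 := by
  by_contra! hstar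
  obtain ⟨p, hp⟩ := Set.nonempty_of_ncard_ne_zero (by omega : E.ncard ≠ 0)
  have hcover : E ⊆ {p.1} ×ˢ B ∪ A ×ˢ {p.2} := by
    intro q hq
    by_cases h₁ : q.1 = p.1
    · exact Or.inl ⟨h₁, (hE hq).2⟩
    · exact Or.inr ⟨(hE hq).1, hstar q hq p hp h₁⟩
  have := (Set.ncard_le_ncard hcover).trans (Set.ncard_union_le _ _)
  simp only [Set.ncard_prod, Set.ncard_singleton, one_mul, mul_one] at this
  omega

section crossEdges

variable {V : Type*} [Finite V] (G : SimpleGraph V)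

lemma crossEdges_add_ncard_not_adj (A B : Set V) :
    crossEdges G A B + {p : V × V | p.1 ∈ A ∧ p.2 ∈ B ∧ ¬G.Adj p.1 p.2}.ncard =
      A.ncard * B.ncard := by
  rw [crossEdges, ← Set.ncard_union_eq, ← Set.ncard_prod]
  · congr 1
    ext p
    simp only [Set.mem_union, Set.mem_ofPred_eq, Set.mem_prod]
    tauto
  · exact Set.disjoint_left.mpr fun p hp hp' => hp'.2.2 hp.2.2

lemma crossEdges_le_ncard_mul (A B : Set V) : crossEdges G A B ≤ A.ncard * B.ncard :=
  Nat.le.intro (crossEdges_add_ncard_not_adj G A B)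

lemma ncard_mul_add_crossEdges_le {A B V₁ V₂ : Set V} (hA : A ⊆ V₁) (hB : B ⊆ V₂) :
    A.ncard * B.ncard + crossEdges G V₁ V₂ ≤ crossEdges G A B + V₁.ncard * V₂.ncard := by
  rw [← crossEdges_add_ncard_not_adj G A B, ← crossEdges_add_ncard_not_adj G V₁ V₂]
  have : {p : V × V | p.1 ∈ A ∧ p.2 ∈ B ∧ ¬G.Adj p.1 p.2}.ncard ≤
      {p : V × V | p.1 ∈ V₁ ∧ p.2 ∈ V₂ ∧ ¬G.Adj p.1 p.2}.ncard :=
    Set.ncard_le_ncard fun p hp => ⟨hA hp.1, hB hp.2.1, hp.2.2⟩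
  omega

end crossEdges

lemma add_lt_of_dense_cut {a b c p q e n δ : ℝ} (hn : 49 ≤ n) (hp : 0 ≤ p) (hq : 0 ≤ q)
    (hpq : p + q ≤ n - 1) (hcut : n ^ 2 / 4 - 2 * δ * n ^ 2 ≤ e) (he : e ≤ p * q)
    (hmono : a * b + e ≤ c + p * q) (ha : √(3 * δ) * n < a) (hb : √(3 * δ) * n < b) :
    a + b < c := by
  -- the cut bound forces `2δn² ≥ (2n - 1) / 4`, hence `√(3δ) n ≥ 6` and `ab / 3 ≥ a + b`
  have hpq' : p * q ≤ (n - 1) ^ 2 / 4 := by nlinarith [sq_nonneg (p - q)]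
  have hδ : (2 * n - 1) / 4 ≤ 2 * δ * n ^ 2 := by nlinarith
  have hδ0 : 0 ≤ δ := by nlinarith
  set s := √(3 * δ) * n
  have hs : s ^ 2 = 3 * δ * n ^ 2 := by rw [mul_pow, Real.sq_sqrt (by positivity)]
  have hs6 : 6 ≤ s := by nlinarith [show 0 ≤ s by positivity]
  have hab : s ^ 2 < a * b := by nlinarith
  nlinarith

lemma ncard_add_ncard_lt_crossEdges {V : Type*} [Finite V] {G : SimpleGraph V}
    {V₁ V₂ A B : Set V} {n : ℕ} {δ : ℝ} (hn : 49 ≤ n) (hsize : V₁.ncard + V₂.ncard + 1 ≤ n)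
    (hcut : (n : ℝ) ^ 2 / 4 - 2 * δ * (n : ℝ) ^ 2 ≤ crossEdges G V₁ V₂)
    (hA : A ⊆ V₁) (hB : B ⊆ V₂) (hAcard : √(3 * δ) * n < A.ncard)
    (hBcard : √(3 * δ) * n < B.ncard) :
    A.ncard + B.ncard < crossEdges G A B := by
  have hsize' : (V₁.ncard : ℝ) + V₂.ncard ≤ n - 1 := by
    have : ((V₁.ncard + V₂.ncard + 1 : ℕ) : ℝ) ≤ n := by exact_mod_cast hsize
    push_cast at this
    linarith
  have hcross : (crossEdges G V₁ V₂ : ℝ) ≤ V₁.ncard * V₂.ncard := by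
    exact_mod_cast crossEdges_le_ncard_mul G V₁ V₂
  have hmono : (A.ncard : ℝ) * B.ncard + crossEdges G V₁ V₂ ≤
      crossEdges G A B + V₁.ncard * V₂.ncard := by
    exact_mod_cast ncard_mul_add_crossEdges_le G hA hB
  exact_mod_cast add_lt_of_dense_cut (by exact_mod_cast hn) (Nat.cast_nonneg _)
    (Nat.cast_nonneg _) hsize' hcut hcross hmono hAcard hBcard

/-- There exist `δ₀ > 0` and `n₀` such that for all `0 < δ ≤ δ₀` and `n ≥ n₀`,
under the Setup, every `v ∈ V'` satisfies
`min{|N_G(v) ∩ D₁|, |N_G(v) ∩ D₂|} ≤ √(3δ)·n`. -/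
theorem stmt13 : ∃ δ0 : ℝ, 0 < δ0 ∧ ∃ n0 : ℕ,
    ∀ δ : ℝ, 0 < δ → δ ≤ δ0 → ∀ n : ℕ, n0 ≤ n →
    ∀ G : SimpleGraph (Fin n), _root_.Free C4expansion G →
    (∀ u v : Fin n, G.Adj u v → ∃ w : Fin n, G.Adj u w ∧ G.Adj v w) →
    ∀ (x : Fin n) (V1 V2 : Set (Fin n)),
    Disjoint V1 V2 → V1 ∪ V2 = {x}ᶜ →
    (∀ W1 W2 : Set (Fin n), Disjoint W1 W2 → W1 ∪ W2 = {x}ᶜ →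
      crossEdges G W1 W2 ≤ crossEdges G V1 V2) →
    ((n : ℝ) ^ 2 / 4 - 2 * δ * (n : ℝ) ^ 2 ≤ (crossEdges G V1 V2 : ℝ)) →
    ∀ D : Set (Fin n),
    D = {v : Fin n | v ≠ x ∧ G.Adj v x ∧
      (n : ℝ) / 200 ≤ (edgeTriangleDeg G v x : ℝ)} →
    ∀ D1 D2 : Set (Fin n), D1 = D ∩ V1 → D2 = D ∩ V2 →
    ∀ v : Fin n, v ≠ x →
      min (((G.neighborSet v ∩ D1).ncard : ℝ)) (((G.neighborSet v ∩ D2).ncard : ℝ))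
        ≤ Real.sqrt (3 * δ) * (n : ℝ) := by
  refine ⟨1, one_pos, 1200, ?_⟩
  intro δ _ _ n hn G hfree _ x V1 V2 hdisj hunion _ hcut D hD D1 D2 rfl rfl v hvx
  by_contra! hlarge
  rw [lt_min_iff] at hlarge
  set A := G.neighborSet v ∩ (D ∩ V1)
  set B := G.neighborSet v ∩ (D ∩ V2)
  have hsize : V1.ncard + V2.ncard + 1 = n := by
    rw [← Set.ncard_union_eq hdisj, hunion, ← Set.ncard_singleton x, add_comm,
      Set.ncard_add_ncard_compl, Nat.card_eq_fintype_card, Fintype.card_fin]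
  have hmany : A.ncard + B.ncard < crossEdges G A B :=
    ncard_add_ncard_lt_crossEdges (by omega) hsize.le hcut (fun d hd => hd.2.2)
      (fun d hd => hd.2.2) hlarge.1 hlarge.2
  obtain ⟨⟨d₁, d₂⟩, ⟨⟨hv₁, hD₁, hV₁⟩, ⟨hv₂, hD₂, hV₂⟩, h₁₂⟩, ⟨d₁', d₂'⟩,
      ⟨⟨hv₁', hD₁', hV₁'⟩, ⟨hv₂', hD₂', hV₂'⟩, h₁₂'⟩, hd₁, hd₂⟩ :=
    exists_disjoint_pairs_of_ncard_lt (fun p hp => ⟨hp.1, hp.2.1⟩) hmany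
  have hmemD : ∀ d ∈ D, d ≠ x ∧ G.Adj d x ∧ 5 < edgeTriangleDeg G d x := by
    intro d hd
    rw [hD] at hd
    refine ⟨hd.1, hd.2.1, ?_⟩
    have : (6 : ℝ) ≤ edgeTriangleDeg G d x := by
      linarith [hd.2.2, show (1200 : ℝ) ≤ n by exact_mod_cast hn]
    exact_mod_cast this
  obtain ⟨-, hx₁, hdeg₁⟩ := hmemD d₁ hD₁
  obtain ⟨-, hx₁', hdeg₁'⟩ := hmemD d₁' hD₁'
  exact hfree <| contains_C4expansion_of_two_cross_edges hvx hd₁ hd₂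
    (hdisj.ne_of_mem hV₁ hV₂') (hdisj.ne_of_mem hV₁' hV₂) (hmemD d₂ hD₂).1.symm
    (hmemD d₂' hD₂').1.symm hv₁ hv₁' hv₂ hv₂' hx₁ hx₁' h₁₂ h₁₂' hdeg₁ hdeg₁'
end

section
/- There exist δ0 > 0 and n0 ∈ ℕ such that the following holds for all 0 < δ ≤ δ0 and n ≥ n0. Assume the Setup and assume |D̄| ≤ 8δn. Then for every i ∈ {1,2} and every vertex v ∈ V_i, |N_G(v) ∩ D_i| ≤ 11√δ·n. -/
open SimpleGraph

/-!
Fix `v ∈ V₁` and let `S = N(v) ∩ D₁`; each `u ∈ S` spans a path `x u v` with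
`d(ux) ≥ n/200 ≥ 8`. If two vertices `u₁ ≠ u₂` of `S` also had `d(uv) ≥ 8`, every edge of the
4-cycle `x u₁ v u₂` would lie in `8 = |V(C₄)| + |E(C₄)|` triangles, enough to pick distinct apexes
off the cycle (Hall's theorem): a copy of `C₄^△`. So all but at most one `u ∈ S` have at most 7
neighbours in `N(v) ∩ V₂`, while maximality of the cut gives `|N(v) ∩ V₂| ≥ |N(v) ∩ V₁| ≥ |S|`.
The cut therefore misses about `|S|²` pairs of `V₁ × V₂`, whereas `e(V₁, V₂) ≥ n²/4 - 2δn²`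
leaves room for at most `2δn²` missing pairs.
-/
theorem contains_expansion_of_le_ncard_commonNeighbors {W V : Type*} [Finite W] [Finite V]
    {F : SimpleGraph W} {G : SimpleGraph V} (c : F →g G) (hc : Function.Injective c)
    (hcn : ∀ u v, F.Adj u v →
      Nat.card W + Nat.card F.edgeSet ≤ (G.commonNeighbors (c u) (c v)).ncard) :
    Contains (expansion F) G := by
  classical
  have : Fintype F.edgeSet := Fintype.ofFinite _
  -- Outside the image of `c` each edge keeps `|E(F)|` candidate apexes, so Hall's condition holds.
  let apexes (e : F.edgeSet) : Set V :=
    {w | (∀ k ∈ (e : Sym2 W), G.Adj (c k) w) ∧ w ∉ Set.range c}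
  have apexes_card (e : F.edgeSet) : Nat.card F.edgeSet ≤ (apexes e).ncard := by
    obtain ⟨e, he⟩ := e
    induction e using Sym2.ind with
    | _ u v =>
      have hrange : (Set.range c).ncard ≤ Nat.card W := by
        rw [← Set.image_univ]
        exact le_trans Set.ncard_image_le (Set.ncard_le_card _)
      have heq : apexes ⟨s(u, v), he⟩ = G.commonNeighbors (c u) (c v) \ Set.range c := by
        ext w; simp [apexes, mem_commonNeighbors, and_assoc]
      rw [heq]
      have := Set.le_ncard_sdiff (Set.range c) (G.commonNeighbors (c u) (c v))
      have := hcn u v he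
      omega
  obtain ⟨w, hw_inj, hw⟩ := (Finset.all_card_le_biUnion_card_iff_exists_injective
    (fun e => (apexes e).toFinite.toFinset)).1 fun s => by
      obtain rfl | ⟨e, he⟩ := s.eq_empty_or_nonempty
      · simp
      calc s.card ≤ Nat.card F.edgeSet := by
            rw [Nat.card_eq_fintype_card]; exact Finset.card_le_univ s
        _ ≤ (apexes e).ncard := apexes_card e
        _ ≤ _ := by
          rw [Set.ncard_eq_toFinset_card _ (apexes e).toFinite]
          exact Finset.card_le_card
            (Finset.subset_biUnion_of_mem (fun e => (apexes e).toFinite.toFinset) he)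
  simp only [Set.Finite.mem_toFinset] at hw
  refine ⟨⟨Sum.elim c w, ?_⟩, hc.sumElim hw_inj fun u e h => (hw e).2 ⟨u, h⟩⟩
  rintro (u | e) (v | f) ⟨-, (⟨u', v', hu, hv, huv⟩ | ⟨u', e', hu, hv, hue⟩) |
      (⟨u', v', hu, hv, huv⟩ | ⟨u', e', hu, hv, hue⟩)⟩ <;>
    simp only [Sum.inl.injEq, Sum.inr.injEq, reduceCtorEq] at hu hv <;> subst hu hv
  exacts [c.map_adj huv, (c.map_adj huv).symm, (hw _).1 _ hue, ((hw _).1 _ hue).symm]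

theorem cycleGraph_four_adj_iff {i j : Fin 4} :
    (cycleGraph 4).Adj i j ↔ j = i + 1 ∨ i = j + 1 := by
  rw [cycleGraph_adj, sub_eq_iff_eq_add', sub_eq_iff_eq_add', or_comm]

theorem nat_card_edgeSet_cycleGraph_four : Nat.card (cycleGraph 4).edgeSet = 4 := by
  rw [Nat.card_eq_fintype_card]; decide

theorem contains_C4expansion_of_le_ncard_commonNeighbors {V : Type*} [Finite V]
    {G : SimpleGraph V} (c : Fin 4 → V) (hadj : ∀ i, G.Adj (c i) (c (i + 1)))
    (h02 : c 0 ≠ c 2) (h13 : c 1 ≠ c 3)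
    (hcn : ∀ i, 8 ≤ (G.commonNeighbors (c i) (c (i + 1))).ncard) :
    Contains C4expansion G := by
  have hc : Function.Injective c := by
    have := (hadj 0).ne; have := (hadj 1).ne; have := (hadj 2).ne; have := (hadj 3).ne
    intro i j h
    fin_cases i <;> fin_cases j <;> simp_all [eq_comm]
  refine contains_expansion_of_le_ncard_commonNeighbors
    ⟨c, fun h => ?_⟩ hc fun i j h => ?_
  · rcases cycleGraph_four_adj_iff.1 h with rfl | rfl
    exacts [hadj _, (hadj _).symm]
  · rw [Nat.card_fin, nat_card_edgeSet_cycleGraph_four]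
    rcases cycleGraph_four_adj_iff.1 h with rfl | rfl
    · exact hcn i
    · rw [commonNeighbors_symm]; exact hcn j

theorem ncard_midpoints_of_heavy_paths_le_one {V : Type*} [Finite V] {G : SimpleGraph V}
    (hfree : _root_.Free C4expansion G) {x v : V} (hxv : x ≠ v) :
    {u | G.Adj x u ∧ G.Adj u v ∧ 8 ≤ (G.commonNeighbors x u).ncard ∧
      8 ≤ (G.commonNeighbors u v).ncard}.ncard ≤ 1 := by
  refine (Set.ncard_le_one_iff (Set.toFinite _)).2
    fun {u₁ u₂} ⟨hxu₁, hu₁v, h₁x, h₁v⟩ ⟨hxu₂, hu₂v, h₂x, h₂v⟩ => ?_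
  by_contra hne
  refine hfree (contains_C4expansion_of_le_ncard_commonNeighbors ![x, u₁, v, u₂]
    (fun i => ?_) hxv hne fun i => ?_)
  · fin_cases i
    exacts [hxu₁, hu₁v, hu₂v.symm, hxu₂.symm]
  · fin_cases i
    · exact h₁x
    · exact h₁v
    · simpa [commonNeighbors_symm] using h₂v
    · simpa [commonNeighbors_symm] using h₂x

theorem crossEdges_comm {V : Type*} (G : SimpleGraph V) (A B : Set V) :
    crossEdges G A B = crossEdges G B A := by
  have : {p : V × V | p.1 ∈ B ∧ p.2 ∈ A ∧ G.Adj p.1 p.2}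
      = Prod.swap '' {p : V × V | p.1 ∈ A ∧ p.2 ∈ B ∧ G.Adj p.1 p.2} := by
    ext ⟨a, b⟩
    simp only [Set.mem_ofPred_eq, Set.image_swap_eq_preimage_swap, Set.mem_preimage,
      Prod.swap_prod_mk]
    exact ⟨fun ⟨hb, ha, h⟩ => ⟨ha, hb, h.symm⟩, fun ⟨ha, hb, h⟩ => ⟨hb, ha, h.symm⟩⟩
  rw [crossEdges, crossEdges, this, Set.ncard_image_of_injective _ Prod.swap_injective]

theorem crossEdges_eq_add_ncard_neighborSet_inter {V : Type*} [Finite V] (G : SimpleGraph V)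
    {A B : Set V} {v : V} (hvA : v ∈ A) (hvB : v ∉ B) :
    crossEdges G A B = crossEdges G (A \ {v}) B + (G.neighborSet v ∩ B).ncard := by
  have hsplit : {p : V × V | p.1 ∈ A ∧ p.2 ∈ B ∧ G.Adj p.1 p.2}
      = {p : V × V | p.1 ∈ A \ {v} ∧ p.2 ∈ B ∧ G.Adj p.1 p.2}
        ∪ Prod.mk v '' (G.neighborSet v ∩ B) := by
    ext ⟨a, b⟩
    by_cases hav : a = v
    · subst hav; simp [hvA, and_comm]
    · simp [hav, Ne.symm hav]
  have hdisj : Disjoint {p : V × V | p.1 ∈ A \ {v} ∧ p.2 ∈ B ∧ G.Adj p.1 p.2}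
      (Prod.mk v '' (G.neighborSet v ∩ B)) := by
    rw [Set.disjoint_right]
    rintro _ ⟨b, -, rfl⟩ ⟨⟨-, hne⟩, -⟩
    exact hne rfl
  rw [crossEdges, hsplit, Set.ncard_union_eq hdisj,
    Set.ncard_image_of_injective _ (Prod.mk_right_injective v)]
  rfl

theorem crossEdges_add_ncard_nonadj {V : Type*} [Finite V] (G : SimpleGraph V) (A B : Set V) :
    crossEdges G A B + {p : V × V | p.1 ∈ A ∧ p.2 ∈ B ∧ ¬G.Adj p.1 p.2}.ncard
      = A.ncard * B.ncard := by
  have hdisj : Disjoint {p : V × V | p.1 ∈ A ∧ p.2 ∈ B ∧ G.Adj p.1 p.2}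
      {p : V × V | p.1 ∈ A ∧ p.2 ∈ B ∧ ¬G.Adj p.1 p.2} :=
    Set.disjoint_left.2 fun _ h h' => h'.2.2 h.2.2
  have hunion : {p : V × V | p.1 ∈ A ∧ p.2 ∈ B ∧ G.Adj p.1 p.2}
      ∪ {p : V × V | p.1 ∈ A ∧ p.2 ∈ B ∧ ¬G.Adj p.1 p.2} = A ×ˢ B := by
    ext p; by_cases G.Adj p.1 p.2 <;> simp_all
  rw [crossEdges, ← Set.ncard_union_eq hdisj, hunion, Set.ncard_prod]

theorem mul_le_ncard_setOf_prod {α β : Type*} [Finite α] [Finite β] {s : Set α} {t : Set β}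
    {r : α → β → Prop} {k : ℕ} (h : ∀ a ∈ s, k ≤ {b | b ∈ t ∧ r a b}.ncard) :
    s.ncard * k ≤ {p : α × β | p.1 ∈ s ∧ p.2 ∈ t ∧ r p.1 p.2}.ncard := by
  classical
  have := Fintype.ofFinite α
  have := Fintype.ofFinite β
  simp only [Set.ncard_eq_toFinset_card'] at h ⊢
  have hpairs : Set.toFinset {p : α × β | p.1 ∈ s ∧ p.2 ∈ t ∧ r p.1 p.2}
      = {p ∈ s.toFinset ×ˢ t.toFinset | r p.1 p.2} := by
    ext; simp [and_assoc]
  rw [hpairs, Finset.card_filter, Finset.sum_product, ← smul_eq_mul]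
  refine Finset.card_nsmul_le_sum _ _ _ fun a ha => ?_
  rw [← Finset.card_filter]
  exact (h a (Set.mem_toFinset.1 ha)).trans (Finset.card_le_card fun b hb => by simpa using hb)

def IsMaxCut {V : Type*} (G : SimpleGraph V) (A B : Set V) : Prop :=
  Disjoint A B ∧ ∀ A' B' : Set V, Disjoint A' B' → A' ∪ B' = A ∪ B →
    crossEdges G A' B' ≤ crossEdges G A B

theorem IsMaxCut.symm {V : Type*} {G : SimpleGraph V} {A B : Set V} (h : IsMaxCut G A B) :
    IsMaxCut G B A := by
  refine ⟨h.1.symm, fun A' B' hdisj hunion => ?_⟩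
  rw [crossEdges_comm G B]
  exact h.2 A' B' hdisj (hunion.trans (Set.union_comm B A))

theorem IsMaxCut.ncard_neighborSet_inter_le {V : Type*} [Finite V] {G : SimpleGraph V}
    {A B : Set V} (h : IsMaxCut G A B) {v : V} (hv : v ∈ A) :
    (G.neighborSet v ∩ A).ncard ≤ (G.neighborSet v ∩ B).ncard := by
  have hvB : v ∉ B := Set.disjoint_left.1 h.1 hv
  have hmoved := h.2 (A \ {v}) (insert v B)
    (Set.disjoint_insert_right.2 ⟨fun hv' => hv'.2 rfl, h.1.mono_left Set.sdiff_subset⟩)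
    (by rw [Set.union_insert, ← Set.insert_union, Set.insert_sdiff_singleton,
      Set.insert_eq_of_mem hv])
  have hA : G.neighborSet v ∩ (A \ {v}) = G.neighborSet v ∩ A := by
    ext w; simp only [Set.mem_inter_iff, Set.mem_sdiff, Set.mem_singleton_iff, mem_neighborSet]
    exact ⟨fun ⟨h, h', _⟩ => ⟨h, h'⟩, fun ⟨h, h'⟩ => ⟨h, h', (G.ne_of_adj h).symm⟩⟩
  rw [crossEdges_comm G (A \ {v}), crossEdges_eq_add_ncard_neighborSet_inter G
      (Set.mem_insert v B) (fun hv' => hv'.2 rfl), Set.insert_sdiff_self_of_notMem hvB, hA,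
    crossEdges_comm G B, crossEdges_eq_add_ncard_neighborSet_inter G hv hvB] at hmoved
  omega

theorem IsMaxCut.ncard_sub_one_mul_ncard_sub_eight_le {V : Type*} [Finite V] {G : SimpleGraph V}
    (hfree : _root_.Free C4expansion G) {A B D : Set V} (h : IsMaxCut G A B) {x v : V}
    (hxA : x ∉ A) (hD : ∀ u ∈ D, G.Adj x u ∧ 8 ≤ (G.commonNeighbors x u).ncard) (hv : v ∈ A) :
    ((G.neighborSet v ∩ (D ∩ A)).ncard - 1) * ((G.neighborSet v ∩ (D ∩ A)).ncard - 8)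
      ≤ {p : V × V | p.1 ∈ A ∧ p.2 ∈ B ∧ ¬G.Adj p.1 p.2}.ncard := by
  set S := G.neighborSet v ∩ (D ∩ A)
  set P := {u ∈ S | 8 ≤ (G.commonNeighbors u v).ncard}
  have hP : P.ncard ≤ 1 := by
    refine (Set.ncard_le_ncard ?_).trans
      (ncard_midpoints_of_heavy_paths_le_one hfree (x := x) (v := v) ?_)
    · exact fun u ⟨⟨hvu, hu, _⟩, hcn⟩ => ⟨(hD u hu).1, hvu.symm, (hD u hu).2, hcn⟩
    · rintro rfl; exact hxA hv
  have hSB : S.ncard ≤ (G.neighborSet v ∩ B).ncard :=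
    (Set.ncard_le_ncard (Set.inter_subset_inter_right _ Set.inter_subset_right)).trans
      (h.ncard_neighborSet_inter_le hv)
  have hlight :
      ∀ u ∈ S \ P, (G.neighborSet v ∩ B).ncard - 8 ≤ {z | z ∈ B ∧ ¬G.Adj u z}.ncard := by
    rintro u ⟨hu, huP⟩
    have hcn : (G.commonNeighbors u v).ncard < 8 := not_le.1 fun hcn => huP ⟨hu, hcn⟩
    calc (G.neighborSet v ∩ B).ncard - 8
        ≤ (G.neighborSet v ∩ B).ncard - (G.commonNeighbors u v).ncard := by omega
      _ ≤ ((G.neighborSet v ∩ B) \ G.commonNeighbors u v).ncard := Set.le_ncard_sdiff _ _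
      _ ≤ _ := Set.ncard_le_ncard <| by
        rintro z ⟨⟨hvz, hz⟩, hnot⟩
        exact ⟨hz, fun huz => hnot ⟨huz, hvz⟩⟩
  have hSP : S.ncard - 1 ≤ (S \ P).ncard :=
    (Nat.sub_le_sub_left hP _).trans (Set.le_ncard_sdiff P S)
  calc (S.ncard - 1) * (S.ncard - 8) ≤ (S \ P).ncard * ((G.neighborSet v ∩ B).ncard - 8) :=
        Nat.mul_le_mul hSP (by omega)
    _ ≤ {p : V × V | p.1 ∈ S \ P ∧ p.2 ∈ B ∧ ¬G.Adj p.1 p.2}.ncard :=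
        mul_le_ncard_setOf_prod hlight
    _ ≤ _ := Set.ncard_le_ncard <| by
      rintro p ⟨hp, hpB, hnot⟩
      exact ⟨hp.1.2.2, hpB, hnot⟩

theorem ncard_nonadj_add_le {n : ℕ} {δ : ℝ} {G : SimpleGraph (Fin n)} {x : Fin n}
    {A B : Set (Fin n)} (hAB : Disjoint A B) (hU : A ∪ B = {x}ᶜ)
    (hcross : (n : ℝ) ^ 2 / 4 - 2 * δ * (n : ℝ) ^ 2 ≤ (crossEdges G A B : ℝ)) :
    ({p : Fin n × Fin n | p.1 ∈ A ∧ p.2 ∈ B ∧ ¬G.Adj p.1 p.2}.ncard : ℝ) + (2 * n - 1) / 4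
      ≤ 2 * δ * (n : ℝ) ^ 2 := by
  have hsize : A.ncard + B.ncard + 1 = n := by
    rw [← Set.ncard_union_eq hAB, hU, Set.ncard_compl, Set.ncard_singleton,
      Nat.card_eq_fintype_card, Fintype.card_fin]
    have : 0 < n := Fin.pos x
    omega
  have hsplit := crossEdges_add_ncard_nonadj G A B
  have hsizeR : (A.ncard : ℝ) + B.ncard + 1 = n := by exact_mod_cast hsize
  have hsplitR : (crossEdges G A B : ℝ)
      + {p : Fin n × Fin n | p.1 ∈ A ∧ p.2 ∈ B ∧ ¬G.Adj p.1 p.2}.ncard = A.ncard * B.ncard := by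
    exact_mod_cast hsplit
  nlinarith [sq_nonneg ((A.ncard : ℝ) - B.ncard)]

theorem IsMaxCut.ncard_neighborSet_inter_le_mul_sqrt {n : ℕ} (hn : 1600 ≤ n) {δ : ℝ}
    {G : SimpleGraph (Fin n)} (hfree : _root_.Free C4expansion G) {x : Fin n}
    {A B D : Set (Fin n)} (h : IsMaxCut G A B) (hU : A ∪ B = {x}ᶜ)
    (hcross : (n : ℝ) ^ 2 / 4 - 2 * δ * (n : ℝ) ^ 2 ≤ (crossEdges G A B : ℝ))
    (hD : ∀ u ∈ D, G.Adj u x ∧ (n : ℝ) / 200 ≤ (edgeTriangleDeg G u x : ℝ)) {v : Fin n}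
    (hv : v ∈ A) :
    ((G.neighborSet v ∩ (D ∩ A)).ncard : ℝ) ≤ 11 * Real.sqrt δ * n := by
  have hxA : x ∉ A := fun hx => (hU ▸ Set.mem_union_left B hx : x ∈ ({x}ᶜ : Set (Fin n))) rfl
  have hnR : (1600 : ℝ) ≤ n := by exact_mod_cast hn
  have hD' : ∀ u ∈ D, G.Adj x u ∧ 8 ≤ (G.commonNeighbors x u).ncard := by
    intro u hu
    refine ⟨(hD u hu).1.symm, ?_⟩
    have : (8 : ℝ) ≤ edgeTriangleDeg G u x := by linarith [(hD u hu).2]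
    rw [commonNeighbors_symm]
    exact_mod_cast this
  have hcore := h.ncard_sub_one_mul_ncard_sub_eight_le hfree hxA hD' hv
  have hnonadj := ncard_nonadj_add_le h.1 hU hcross
  set b := (G.neighborSet v ∩ (D ∩ A)).ncard
  set NE := {p : Fin n × Fin n | p.1 ∈ A ∧ p.2 ∈ B ∧ ¬G.Adj p.1 p.2}.ncard
  set t := Real.sqrt δ * n
  have hNE0 : (0 : ℝ) ≤ NE := Nat.cast_nonneg NE
  have hδ : 0 ≤ δ := by nlinarith
  have ht0 : 0 ≤ t := mul_nonneg (Real.sqrt_nonneg δ) (Nat.cast_nonneg n)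
  have ht : t ^ 2 = δ * n ^ 2 := by rw [mul_pow, Real.sq_sqrt hδ]
  have hNE : (NE : ℝ) ≤ 2 * t ^ 2 := by linarith
  have ht8 : 8 ≤ t := by nlinarith
  by_contra! hb
  replace hb : 11 * t < b := by simpa only [t, mul_assoc] using hb
  have hb8 : 8 ≤ b := by exact_mod_cast (show (8 : ℝ) ≤ b by linarith)
  have hcoreR : ((b : ℝ) - 1) * ((b : ℝ) - 8) ≤ NE := by
    have := Nat.cast_le (α := ℝ) |>.2 hcore
    rwa [Nat.cast_mul, Nat.cast_sub (by omega), Nat.cast_sub hb8, Nat.cast_one,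
      Nat.cast_ofNat] at this
  have h10 : 10 * t < (b : ℝ) - 8 := by linarith
  nlinarith [mul_lt_mul'' h10 h10 (by positivity) (by positivity)]

/-- There exist `δ₀ > 0` and `n₀` such that for all `0 < δ ≤ δ₀` and `n ≥ n₀`,
under the Setup with `|D̄| ≤ 8δn`, every `i ∈ {1,2}` and `v ∈ Vᵢ` satisfy
`|N_G(v) ∩ Dᵢ| ≤ 11√δ·n`. -/
theorem stmt14 : ∃ δ0 : ℝ, 0 < δ0 ∧ ∃ n0 : ℕ,
    ∀ δ : ℝ, 0 < δ → δ ≤ δ0 → ∀ n : ℕ, n0 ≤ n →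
    ∀ G : SimpleGraph (Fin n), _root_.Free C4expansion G →
    (∀ u v : Fin n, G.Adj u v → ∃ w : Fin n, G.Adj u w ∧ G.Adj v w) →
    ∀ (x : Fin n) (V1 V2 : Set (Fin n)),
    Disjoint V1 V2 → V1 ∪ V2 = {x}ᶜ →
    (∀ W1 W2 : Set (Fin n), Disjoint W1 W2 → W1 ∪ W2 = {x}ᶜ →
      crossEdges G W1 W2 ≤ crossEdges G V1 V2) →
    ((n : ℝ) ^ 2 / 4 - 2 * δ * (n : ℝ) ^ 2 ≤ (crossEdges G V1 V2 : ℝ)) →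
    ∀ D : Set (Fin n),
    D = {v : Fin n | v ≠ x ∧ G.Adj v x ∧
      (n : ℝ) / 200 ≤ (edgeTriangleDeg G v x : ℝ)} →
    ∀ Dbar : Set (Fin n), Dbar = ({x}ᶜ : Set (Fin n)) \ D →
    ∀ D1 D2 : Set (Fin n), D1 = D ∩ V1 → D2 = D ∩ V2 →
    ((Dbar.ncard : ℝ) ≤ 8 * δ * (n : ℝ)) →
    ∀ v : Fin n,
      (v ∈ V1 → ((G.neighborSet v ∩ D1).ncard : ℝ) ≤ 11 * Real.sqrt δ * (n : ℝ)) ∧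
      (v ∈ V2 → ((G.neighborSet v ∩ D2).ncard : ℝ) ≤ 11 * Real.sqrt δ * (n : ℝ)) := by
  refine ⟨1, one_pos, 1600, fun δ _ _ n hn G hfree _ x V1 V2 hdisj hunion hmax hcross D hD _ _
    D1 D2 hD1 hD2 _ v => ?_⟩
  have hcut : IsMaxCut G V1 V2 :=
    ⟨hdisj, fun W1 W2 hW hWU => hmax W1 W2 hW (hWU.trans hunion)⟩
  have hDx : ∀ u ∈ D, G.Adj u x ∧ (n : ℝ) / 200 ≤ (edgeTriangleDeg G u x : ℝ) := by
    rw [hD]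
    exact fun u hu => hu.2
  subst hD1 hD2
  exact ⟨fun hv => hcut.ncard_neighborSet_inter_le_mul_sqrt hn hfree hunion hcross hDx hv,
    fun hv => hcut.symm.ncard_neighborSet_inter_le_mul_sqrt hn hfree
      (by rwa [Set.union_comm]) (by rwa [crossEdges_comm]) hDx hv⟩
end
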